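/- arXiv:2009.05850 — 7 statements merged into one kernel-verified Lean document; each statement's English description precedes it below -/
import Mathlib

section
/- Let Φ be a completely positive map on M_N(ℂ) that is self-adjoint with respect to the KMS inner product. Then Φ is extremal in the cone CP_KMS (i.e., whenever Ψ ∈ CP_KMS and Φ − tΨ is completely positive for some t > 0, Ψ is a nonnegative scalar multiple of Φ) if and only if there exists V ∈ M_N(ℂ) with σ^{−1/2} V σ^{1/2} = V* such that Φ(A) = V* A V for all A ∈ M_N(ℂ). -/
open MeasureTheory Matrix
open scoped ComplexOrder

noncomputable section

/-- The algebra of `N × N` complex matrices. -/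
abbrev Mat (N : ℕ) := Matrix (Fin N) (Fin N) ℂ

variable {N : ℕ}

/-- Real power `σ^s` of a positive definite matrix, defined via the spectral decomposition. -/
noncomputable def mpow (σ : Mat N) (hσ : σ.PosDef) (s : ℝ) : Mat N :=
  (hσ.1.eigenvectorUnitary : Mat N) *
    Matrix.diagonal (fun i => ((hσ.1.eigenvalues i ^ s : ℝ) : ℂ)) *
    star (hσ.1.eigenvectorUnitary : Mat N)

/-- Complete positivity of a linear map on `M_N(ℂ)`: existence of a Kraus representation. -/
def IsCP (Φ : Mat N →ₗ[ℂ] Mat N) : Prop :=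
  ∃ (M : ℕ) (V : Fin M → Mat N), ∀ A, Φ A = ∑ j, (V j)ᴴ * A * V j

/-- The KMS inner product `⟨B,A⟩_KMS = Tr[Bᴴ σ^{1/2} A σ^{1/2}]`. -/
def kmsInner (σ : Mat N) (hσ : σ.PosDef) (B A : Mat N) : ℂ :=
  (Bᴴ * mpow σ hσ (1/2) * A * mpow σ hσ (1/2)).trace

/-- Self-adjointness with respect to the KMS inner product. -/
def IsKMSSelfAdjoint (σ : Mat N) (hσ : σ.PosDef) (Φ : Mat N →ₗ[ℂ] Mat N) : Prop :=
  ∀ A B, kmsInner σ hσ B (Φ A) = kmsInner σ hσ (Φ B) A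

/-!
Conjugating by `σ^{1/4}`, i.e. passing to `Φ̂ = σ^{1/4} Φ(σ^{-1/4} · σ^{-1/4}) σ^{1/4}`, turns
KMS-symmetry into symmetry for the Hilbert–Schmidt inner product, which says that the Choi
matrix of `Φ̂` commutes with the antiunitary `J (vec X) = vec Xᴴ`. A nonzero positive matrix
commuting with `J` has a `J`-fixed eigenvector `vec H` (so `H` is Hermitian) with positive
eigenvalue, and removing the corresponding rank-one part leaves it positive. Hence `Φ` dominates a
positive multiple of the KMS-symmetric map `A ↦ Vᴴ A V` with `V = σ^{1/4} H σ^{-1/4}`, and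
extremality forces `Φ` to be of this form. Conversely, the Choi matrix of `A ↦ Vᴴ A V` is the
rank-one matrix `v vᴴ`, and a positive matrix dominated by `v vᴴ` is a multiple of it.
-/

namespace Matrix

variable {𝕜 n : Type*} [RCLike 𝕜] [Fintype n]

theorem mulVec_vec_conjTranspose {C : Matrix (n × n) (n × n) 𝕜}
    (hC : ∀ p q, C p.swap q.swap = star (C p q)) {X Y : Matrix n n 𝕜}
    (h : C *ᵥ vec X = vec Y) : C *ᵥ vec Xᴴ = vec Yᴴ := by
  ext p
  have hp := congrFun h p.swap
  simp only [mulVec, dotProduct, vec, conjTranspose_apply, Prod.fst_swap, Prod.snd_swap] at hp ⊢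
  rw [← hp, star_sum, ← (Equiv.prodComm n n).sum_comp]
  refine Finset.sum_congr rfl fun q _ => ?_
  simp [← hC p.swap q]

theorem exists_hermitian_mulVec_vec_eq {C : Matrix (n × n) (n × n) ℂ}
    (hC : ∀ p q, C p.swap q.swap = star (C p q)) {μ : ℝ} {X : Matrix n n ℂ} (hX : X ≠ 0)
    (h : C *ᵥ vec X = (μ : ℂ) • vec X) :
    ∃ H : Matrix n n ℂ, H ≠ 0 ∧ Hᴴ = H ∧ C *ᵥ vec H = (μ : ℂ) • vec H := by
  have hXH : C *ᵥ vec Xᴴ = (μ : ℂ) • vec Xᴴ := by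
    simpa [conjTranspose_smul] using mulVec_vec_conjTranspose hC (Y := (μ : ℂ) • X) h
  -- `X + Xᴴ` and `I • (X - Xᴴ)` are Hermitian eigenvectors too, and they cannot both vanish.
  by_cases hS : X + Xᴴ = 0
  · refine ⟨Complex.I • (X - Xᴴ), ?_, ?_, ?_⟩
    · refine smul_ne_zero Complex.I_ne_zero fun hA => hX ?_
      rw [sub_eq_zero] at hA
      rw [← hA, ← two_smul ℂ, smul_eq_zero] at hS
      exact hS.resolve_left two_ne_zero
    · rw [conjTranspose_smul, conjTranspose_sub, conjTranspose_conjTranspose, Complex.star_def,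
        Complex.conj_I]
      module
    · rw [vec_smul, mulVec_smul, vec_sub, mulVec_sub, h, hXH, ← smul_sub, smul_comm]
  · refine ⟨X + Xᴴ, hS, by simp [add_comm], ?_⟩
    rw [vec_add, mulVec_add, h, hXH, smul_add]

theorem PosSemidef.exists_hermitian_eigenmatrix {C : Matrix (n × n) (n × n) ℂ}
    (hC : C.PosSemidef) (hJ : ∀ p q, C p.swap q.swap = star (C p q)) (h0 : C ≠ 0) :
    ∃ μ : ℝ, 0 < μ ∧ ∃ H : Matrix n n ℂ, H ≠ 0 ∧ Hᴴ = H ∧ C *ᵥ vec H = (μ : ℂ) • vec H := by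
  obtain ⟨v, μ, hμ, hv, hCv⟩ := hC.1.exists_eigenvector_of_ne_zero h0
  obtain ⟨X, rfl⟩ := vec_bijective.surjective v
  rw [← Complex.coe_smul] at hCv
  have hμ_nonneg : 0 ≤ μ := by
    obtain ⟨s, hs, hs_eq⟩ := RCLike.pos_iff_exists_ofReal.mp (dotProduct_star_self_pos_iff.mpr hv)
    have := hC.dotProduct_mulVec_nonneg (vec X)
    rw [hCv, dotProduct_smul, smul_eq_mul, ← show (s : ℂ) = _ from hs_eq, ← Complex.ofReal_mul,
      Complex.zero_le_real] at this
    exact nonneg_of_mul_nonneg_left this hs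
  exact ⟨μ, hμ_nonneg.lt_of_ne' hμ, exists_hermitian_mulVec_vec_eq hJ (by simpa using hv) hCv⟩

theorem isStarProjection_inv_smul_vecMulVec {v : n → 𝕜} (hv : v ≠ 0) :
    IsStarProjection ((star v ⬝ᵥ v)⁻¹ • vecMulVec v (star v)) := by
  have hs : star v ⬝ᵥ v ≠ 0 := (dotProduct_star_self_pos_iff.mpr hv).ne'
  refine ⟨?_, ?_⟩
  · rw [IsIdempotentElem, smul_mul_smul, vecMulVec_mul_vecMulVec, vecMulVec_smul, smul_smul,
      mul_assoc, inv_mul_cancel₀ hs, mul_one]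
  · rw [isSelfAdjoint_iff, star_smul, star_inv₀, ← star_dotProduct_star, star_star,
      star_eq_conjTranspose, conjTranspose_vecMulVec, star_star]

theorem vecMulVec_mul_mul_vecMulVec (v : n → 𝕜) (D : Matrix n n 𝕜) :
    vecMulVec v (star v) * D * vecMulVec v (star v) =
      (star v ⬝ᵥ D *ᵥ v) • vecMulVec v (star v) := by
  rw [vecMulVec_mul, vecMulVec_mul_vecMulVec, vecMulVec_smul, dotProduct_mulVec]

variable [DecidableEq n]

theorem PosSemidef.mul_eq_zero_of_conjTranspose_mul_mul_eq_zero {D B : Matrix n n 𝕜}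
    (hD : D.PosSemidef) (h : Bᴴ * D * B = 0) : D * B = 0 := by
  open scoped MatrixOrder in
  obtain ⟨R, rfl⟩ := CStarAlgebra.nonneg_iff_eq_star_mul_self.mp hD.nonneg
  rw [star_eq_conjTranspose] at h ⊢
  rw [conjTranspose_mul_self_mul_eq_zero, ← conjTranspose_mul_self_eq_zero, conjTranspose_mul,
    ← h]
  simp only [Matrix.mul_assoc]

theorem PosSemidef.sub_smul_of_mul_eq {C P : Matrix n n 𝕜} (hC : C.PosSemidef)
    (hP : IsStarProjection P) {μ : ℝ} (hCP : C * P = (μ : 𝕜) • P) :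
    (C - (μ : 𝕜) • P).PosSemidef := by
  have hPC : P * C = (μ : 𝕜) • P := by
    simpa [hP.isSelfAdjoint.star_eq, hC.1.isSelfAdjoint.star_eq] using congrArg star hCP
  have hQ : (1 - P)ᴴ * C * (1 - P) = C - (μ : 𝕜) • P := by
    rw [← star_eq_conjTranspose, hP.one_sub.isSelfAdjoint.star_eq]
    simp only [sub_mul, mul_sub, one_mul, mul_one, hCP, hPC, smul_mul_assoc, hP.isIdempotentElem.eq]
    abel
  exact hQ ▸ hC.conjTranspose_mul_mul_same _

theorem PosSemidef.sub_smul_vecMulVec {C : Matrix n n 𝕜} (hC : C.PosSemidef) {v : n → 𝕜}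
    (hv : v ≠ 0) {μ : ℝ} (hCv : C *ᵥ v = (μ : 𝕜) • v) :
    (C - ((μ : 𝕜) / (star v ⬝ᵥ v)) • vecMulVec v (star v)).PosSemidef := by
  rw [div_eq_mul_inv, ← smul_smul]
  refine hC.sub_smul_of_mul_eq (isStarProjection_inv_smul_vecMulVec hv) ?_
  rw [mul_smul_comm, mul_vecMulVec, hCv, smul_vecMulVec, smul_comm]

theorem PosSemidef.eq_mul_mul_of_one_sub_mul_mul_eq_zero {D P : Matrix n n 𝕜}
    (hD : D.PosSemidef) (hP : IsStarProjection P) (h : (1 - P) * D * (1 - P) = 0) :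
    D = P * D * P := by
  have hQ : (1 - P)ᴴ = 1 - P := hP.one_sub.isSelfAdjoint.star_eq
  have hDQ : D * (1 - P) = 0 := hD.mul_eq_zero_of_conjTranspose_mul_mul_eq_zero (by rwa [hQ])
  have hQD : (1 - P) * D = 0 := by simpa [hQ, hD.1.eq] using congrArg (·ᴴ) hDQ
  rw [Matrix.mul_sub, Matrix.mul_one, sub_eq_zero] at hDQ
  rw [Matrix.sub_mul, Matrix.one_mul, sub_eq_zero] at hQD
  rw [Matrix.mul_assoc, ← hDQ, ← hQD]

open scoped MatrixOrder in
theorem PosSemidef.eq_smul_vecMulVec_of_sub {D : Matrix n n 𝕜} (hD : D.PosSemidef) {v : n → 𝕜}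
    (h : (vecMulVec v (star v) - D).PosSemidef) :
    ∃ μ : ℝ, 0 ≤ μ ∧ D = (μ : 𝕜) • vecMulVec v (star v) := by
  rcases eq_or_ne v 0 with rfl | hv
  · exact ⟨0, le_rfl, by simpa using le_antisymm (by simpa [le_iff] using h) hD.nonneg⟩
  set s := star v ⬝ᵥ v
  set P := s⁻¹ • vecMulVec v (star v)
  have hP : IsStarProjection P := isStarProjection_inv_smul_vecMulVec hv
  have hs : 0 < s := dotProduct_star_self_pos_iff.mpr hv
  have hQDQ : (1 - P) * D * (1 - P) = 0 := by
    have hQ : (1 - P)ᴴ = 1 - P := hP.one_sub.isSelfAdjoint.star_eq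
    have hvQ : vecMulVec v (star v) * (1 - P) = 0 := by
      rw [show vecMulVec v (star v) = s • P by rw [smul_smul, mul_inv_cancel₀ hs.ne', one_smul],
        smul_mul_assoc, hP.mul_one_sub_self, smul_zero]
    have h' := h.conjTranspose_mul_mul_same (1 - P)
    rw [hQ, Matrix.mul_sub (1 - P), Matrix.sub_mul _ _ (1 - P), Matrix.mul_assoc (1 - P),
      hvQ, Matrix.mul_zero] at h'
    exact le_antisymm h' (hQ ▸ hD.conjTranspose_mul_mul_same (1 - P)).nonneg
  obtain ⟨μ, hμ, hμ_eq⟩ := RCLike.nonneg_iff_exists_ofReal.mp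
    (mul_nonneg (mul_nonneg (inv_nonneg.mpr hs.le) (inv_nonneg.mpr hs.le))
      (hD.dotProduct_mulVec_nonneg v))
  refine ⟨μ, hμ, (hD.eq_mul_mul_of_one_sub_mul_mul_eq_zero hP hQDQ).trans ?_⟩
  simp only [P, smul_mul_assoc, mul_smul_comm, smul_smul, vecMulVec_mul_mul_vecMulVec]
  rw [hμ_eq, mul_assoc]

end Matrix

section KrausMaps

variable {𝕜 n : Type*} [RCLike 𝕜] [Fintype n] [DecidableEq n]

def krausMap (V : Matrix n n 𝕜) : Matrix n n 𝕜 →ₗ[𝕜] Matrix n n 𝕜 :=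
  LinearMap.mulLeftRight 𝕜 (Vᴴ, V)

@[simp]
theorem krausMap_apply (V A : Matrix n n 𝕜) : krausMap V A = Vᴴ * A * V := rfl

theorem krausMap_comp_krausMap (S T : Matrix n n 𝕜) :
    krausMap S ∘ₗ krausMap T = krausMap (T * S) := by
  ext1 A
  simp [conjTranspose_mul, Matrix.mul_assoc]

theorem krausMap_one : krausMap (1 : Matrix n n 𝕜) = LinearMap.id := by
  ext1 A
  simp

theorem krausMap_smul (a : 𝕜) (V : Matrix n n 𝕜) :
    krausMap (a • V) = (star a * a) • krausMap V := by
  ext1 A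
  simp [conjTranspose_smul, smul_smul, mul_comm]

theorem krausMap_eq_zero_iff {V : Matrix n n 𝕜} : krausMap V = 0 ↔ V = 0 :=
  ⟨fun h => conjTranspose_mul_self_eq_zero.mp (by simpa using LinearMap.congr_fun h 1),
    fun h => by ext1; simp [h]⟩

def choi : (Matrix n n 𝕜 →ₗ[𝕜] Matrix n n 𝕜) →ₗ[𝕜] Matrix (n × n) (n × n) 𝕜 where
  toFun Φ := of fun p q => Φ (single p.1 q.1 1) p.2 q.2
  map_add' _ _ := rfl
  map_smul' _ _ := rfl

omit [Fintype n] in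
theorem choi_apply (Φ : Matrix n n 𝕜 →ₗ[𝕜] Matrix n n 𝕜) (p q : n × n) :
    choi Φ p q = Φ (single p.1 q.1 1) p.2 q.2 := rfl

theorem choi_injective : Function.Injective (choi (𝕜 := 𝕜) (n := n)) := by
  intro Φ Ψ h
  refine ext_linearMap 𝕜 fun i j => LinearMap.ext_ring ?_
  ext k l
  exact congrFun (congrFun h (i, k)) (j, l)

theorem choi_krausMap (V : Matrix n n 𝕜) :
    choi (krausMap V) = vecMulVec (vec Vᴴ) (star (vec Vᴴ)) := by
  ext p q
  simp [choi_apply, vecMulVec_apply, mul_apply, single_apply, ite_and]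

def IsHSSelfAdjoint (Φ : Matrix n n 𝕜 →ₗ[𝕜] Matrix n n 𝕜) : Prop :=
  ∀ A B, (Bᴴ * Φ A).trace = ((Φ B)ᴴ * A).trace

theorem IsHSSelfAdjoint.choi_swap {Φ : Matrix n n 𝕜 →ₗ[𝕜] Matrix n n 𝕜}
    (h : IsHSSelfAdjoint Φ) (p q : n × n) : choi Φ p.swap q.swap = star (choi Φ p q) := by
  simpa [choi_apply, conjTranspose_single, trace_single_mul, trace_mul_single] using
    h (single p.2 q.2 1) (single p.1 q.1 1)

theorem exists_hermitian_posSemidef_choi_sub {Φ : Matrix n n ℂ →ₗ[ℂ] Matrix n n ℂ}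
    (hΦ : (choi Φ).PosSemidef) (hsa : IsHSSelfAdjoint Φ) (h0 : Φ ≠ 0) :
    ∃ H : Matrix n n ℂ, H ≠ 0 ∧ Hᴴ = H ∧
      ∃ t : ℝ, 0 < t ∧ (choi (Φ - (t : ℂ) • krausMap H)).PosSemidef := by
  obtain ⟨μ, hμ, H, hH0, hH, hCH⟩ := hΦ.exists_hermitian_eigenmatrix hsa.choi_swap
    ((map_ne_zero_iff _ choi_injective).mpr h0)
  have hv : vec H ≠ 0 := by simpa using hH0
  obtain ⟨s, hs, hs_eq⟩ := RCLike.pos_iff_exists_ofReal.mp (dotProduct_star_self_pos_iff.mpr hv)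
  refine ⟨H, hH0, hH, μ / s, div_pos hμ hs, ?_⟩
  rw [map_sub, map_smul, choi_krausMap, hH, Complex.ofReal_div,
    show (s : ℂ) = star (vec H) ⬝ᵥ vec H from hs_eq]
  exact hΦ.sub_smul_vecMulVec hv hCH

theorem exists_eq_smul_krausMap_of_posSemidef_choi {V : Matrix n n 𝕜}
    {Ψ : Matrix n n 𝕜 →ₗ[𝕜] Matrix n n 𝕜} (hΨ : (choi Ψ).PosSemidef)
    (h : (choi (krausMap V - Ψ)).PosSemidef) :
    ∃ c : ℝ, 0 ≤ c ∧ Ψ = (c : 𝕜) • krausMap V := by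
  rw [map_sub, choi_krausMap] at h
  obtain ⟨c, hc, hΨc⟩ := hΨ.eq_smul_vecMulVec_of_sub h
  exact ⟨c, hc, choi_injective (by rw [hΨc, map_smul, choi_krausMap])⟩

end KrausMaps

theorem isCP_iff_exists_eq_sum_krausMap {Φ : Mat N →ₗ[ℂ] Mat N} :
    IsCP Φ ↔ ∃ (M : ℕ) (V : Fin M → Mat N), Φ = ∑ j, krausMap (V j) := by
  simp only [IsCP, LinearMap.ext_iff, LinearMap.sum_apply, krausMap_apply]

theorem isCP_iff_posSemidef_choi {Φ : Mat N →ₗ[ℂ] Mat N} : IsCP Φ ↔ (choi Φ).PosSemidef := by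
  rw [isCP_iff_exists_eq_sum_krausMap, posSemidef_iff_eq_sum_vecMulVec]
  constructor
  · rintro ⟨M, V, rfl⟩
    exact ⟨M, fun j => vec (V j)ᴴ, by simp [map_sum, choi_krausMap]⟩
  · rintro ⟨M, v, hv⟩
    choose X hX using fun j => vec_bijective.surjective (v j)
    exact ⟨M, fun j => (X j)ᴴ, choi_injective (by simp [map_sum, choi_krausMap, hX, hv])⟩

theorem isCP_krausMap (V : Mat N) : IsCP (krausMap V) :=
  ⟨1, fun _ => V, by simp⟩

theorem IsCP.exists_eq_smul_krausMap {Ψ : Mat N →ₗ[ℂ] Mat N} (hΨ : IsCP Ψ) {V : Mat N} {t : ℝ}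
    (ht : 0 < t) (h : IsCP (krausMap V - (t : ℂ) • Ψ)) :
    ∃ c : ℝ, 0 ≤ c ∧ Ψ = (c : ℂ) • krausMap V := by
  have htΨ : (choi ((t : ℂ) • Ψ)).PosSemidef := by
    rw [map_smul]
    exact (isCP_iff_posSemidef_choi.mp hΨ).smul (Complex.zero_le_real.mpr ht.le)
  obtain ⟨c, hc, hΨc⟩ : ∃ c : ℝ, 0 ≤ c ∧ (t : ℂ) • Ψ = (c : ℂ) • krausMap V :=
    exists_eq_smul_krausMap_of_posSemidef_choi htΨ (isCP_iff_posSemidef_choi.mp h)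
  refine ⟨c / t, div_nonneg hc ht.le, ?_⟩
  rw [Complex.ofReal_div, div_eq_inv_mul, ← smul_smul, ← hΨc, smul_smul,
    inv_mul_cancel₀ (Complex.ofReal_ne_zero.mpr ht.ne'), one_smul]

theorem IsCP.krausMap_comp_comp {Φ : Mat N →ₗ[ℂ] Mat N} (h : IsCP Φ) (S T : Mat N) :
    IsCP (krausMap S ∘ₗ Φ ∘ₗ krausMap T) := by
  obtain ⟨M, V, hV⟩ := h
  refine ⟨M, fun j => T * V j * S, fun A => ?_⟩
  simp only [LinearMap.comp_apply, krausMap_apply, hV, Finset.mul_sum, Finset.sum_mul,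
    conjTranspose_mul, Matrix.mul_assoc]

section KMS

variable (σ : Mat N) (hσ : σ.PosDef)

theorem mpow_conjTranspose (s : ℝ) : (mpow σ hσ s)ᴴ = mpow σ hσ s := by
  have hd : star (fun i => ((hσ.1.eigenvalues i ^ s : ℝ) : ℂ)) =
      fun i => ((hσ.1.eigenvalues i ^ s : ℝ) : ℂ) :=
    funext fun _ => Complex.conj_ofReal _
  simp only [mpow, conjTranspose_mul, star_eq_conjTranspose, conjTranspose_conjTranspose,
    diagonal_conjTranspose, hd, Matrix.mul_assoc]

theorem mpow_mul_mpow (s t : ℝ) : mpow σ hσ s * mpow σ hσ t = mpow σ hσ (s + t) := by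
  have hU : star (hσ.1.eigenvectorUnitary : Mat N) * hσ.1.eigenvectorUnitary = 1 :=
    Unitary.coe_star_mul_self _
  simp only [mpow, Matrix.mul_assoc]
  rw [← Matrix.mul_assoc (star _), hU, Matrix.one_mul, ← Matrix.mul_assoc (diagonal _),
    diagonal_mul_diagonal]
  simp_rw [← Complex.ofReal_mul, ← Real.rpow_add (hσ.eigenvalues_pos _)]

theorem mpow_zero : mpow σ hσ 0 = 1 := by
  simp [mpow]

theorem mpow_mul_mpow_assoc (s t : ℝ) (A : Mat N) :
    mpow σ hσ s * (mpow σ hσ t * A) = mpow σ hσ (s + t) * A := by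
  rw [← Matrix.mul_assoc, mpow_mul_mpow]

def mpowSandwich (a : ℝ) : Mat N ≃ₗ[ℂ] Mat N where
  toLinearMap := krausMap (mpow σ hσ a)
  invFun := krausMap (mpow σ hσ (-a))
  left_inv A := by
    change (krausMap (mpow σ hσ (-a)) ∘ₗ krausMap (mpow σ hσ a)) A = A
    rw [krausMap_comp_krausMap, mpow_mul_mpow, add_neg_cancel, mpow_zero,
      krausMap_one, LinearMap.id_apply]
  right_inv A := by
    change (krausMap (mpow σ hσ a) ∘ₗ krausMap (mpow σ hσ (-a))) A = A
    rw [krausMap_comp_krausMap, mpow_mul_mpow, neg_add_cancel, mpow_zero,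
      krausMap_one, LinearMap.id_apply]

theorem mpowSandwich_apply (a : ℝ) (A : Mat N) :
    mpowSandwich σ hσ a A = mpow σ hσ a * A * mpow σ hσ a := by
  simp [mpowSandwich, mpow_conjTranspose]

theorem mpowSandwich_symm (a : ℝ) : (mpowSandwich σ hσ a).symm = mpowSandwich σ hσ (-a) :=
  LinearEquiv.ext fun _ => rfl

theorem mpowSandwich_conj_eq_comp (a : ℝ) (Φ : Mat N →ₗ[ℂ] Mat N) :
    (mpowSandwich σ hσ a).conj Φ = krausMap (mpow σ hσ a) ∘ₗ Φ ∘ₗ krausMap (mpow σ hσ (-a)) := by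
  rw [LinearEquiv.conj_apply, mpowSandwich_symm]
  rfl

def IsKMSKraus (V : Mat N) : Prop :=
  mpow σ hσ (-(1/2)) * V * mpow σ hσ (1/2) = Vᴴ

variable {σ hσ}

theorem IsCP.mpowSandwich_conj {Φ : Mat N →ₗ[ℂ] Mat N} (h : IsCP Φ) (a : ℝ) :
    IsCP ((mpowSandwich σ hσ a).conj Φ) := by
  rw [mpowSandwich_conj_eq_comp]
  exact h.krausMap_comp_comp _ _

theorem mpowSandwich_symm_conj_krausMap (a : ℝ) (H : Mat N) :
    (mpowSandwich σ hσ a).symm.conj (krausMap H) =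
      krausMap (mpow σ hσ a * H * mpow σ hσ (-a)) := by
  rw [mpowSandwich_symm, mpowSandwich_conj_eq_comp, krausMap_comp_krausMap, krausMap_comp_krausMap,
    neg_neg]

theorem kmsInner_eq_trace (B A : Mat N) :
    kmsInner σ hσ B A =
      ((mpowSandwich σ hσ (1/4) B)ᴴ * mpowSandwich σ hσ (1/4) A).trace := by
  have h : mpow σ hσ (1/4) * mpow σ hσ (1/4) = mpow σ hσ (1/2) := by
    rw [mpow_mul_mpow]; norm_num
  simp only [kmsInner, mpowSandwich_apply, conjTranspose_mul, mpow_conjTranspose, ← h,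
    Matrix.mul_assoc]
  rw [trace_mul_comm (mpow σ hσ (1/4))]
  simp only [Matrix.mul_assoc]

theorem IsKMSSelfAdjoint.isHSSelfAdjoint_conj {Φ : Mat N →ₗ[ℂ] Mat N}
    (h : IsKMSSelfAdjoint σ hσ Φ) : IsHSSelfAdjoint ((mpowSandwich σ hσ (1/4)).conj Φ) := by
  intro A B
  have := h ((mpowSandwich σ hσ (1/4)).symm A) ((mpowSandwich σ hσ (1/4)).symm B)
  simpa only [kmsInner_eq_trace, LinearEquiv.apply_symm_apply, LinearEquiv.conj_apply_apply]
    using this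

theorem IsKMSKraus.real_smul {V : Mat N} (hV : IsKMSKraus σ hσ V) (r : ℝ) :
    IsKMSKraus σ hσ ((r : ℂ) • V) := by
  rw [IsKMSKraus, mul_smul_comm, smul_mul_assoc, hV, conjTranspose_smul, Complex.star_def,
    Complex.conj_ofReal]

theorem isKMSKraus_mpow_mul_mul_mpow {H : Mat N} (hH : Hᴴ = H) :
    IsKMSKraus σ hσ (mpow σ hσ (1/4) * H * mpow σ hσ (-(1/4))) := by
  simp only [IsKMSKraus, conjTranspose_mul, mpow_conjTranspose, hH, Matrix.mul_assoc,
    mpow_mul_mpow, mpow_mul_mpow_assoc]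
  norm_num

theorem IsKMSKraus.isKMSSelfAdjoint_krausMap {V : Mat N} (hV : IsKMSKraus σ hσ V) :
    IsKMSSelfAdjoint σ hσ (krausMap V) := by
  have h : mpow σ hσ (1/2) * Vᴴ = V * mpow σ hσ (1/2) := by
    rw [← hV, ← Matrix.mul_assoc, ← Matrix.mul_assoc, mpow_mul_mpow, add_neg_cancel, mpow_zero,
      Matrix.one_mul]
  intro A B
  calc kmsInner σ hσ B (krausMap V A)
      = (Bᴴ * (mpow σ hσ (1/2) * Vᴴ) * A * (V * mpow σ hσ (1/2))).trace := by
        simp only [kmsInner, krausMap_apply, Matrix.mul_assoc]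
    _ = (Bᴴ * (V * mpow σ hσ (1/2)) * A * (mpow σ hσ (1/2) * Vᴴ)).trace := by rw [h]
    _ = kmsInner σ hσ (krausMap V B) A := by
        simp only [kmsInner, krausMap_apply, conjTranspose_mul, conjTranspose_conjTranspose,
          Matrix.mul_assoc]
        rw [trace_mul_comm Vᴴ]
        simp only [Matrix.mul_assoc]

theorem exists_isKMSKraus_isCP_sub {Φ : Mat N →ₗ[ℂ] Mat N} (hcp : IsCP Φ)
    (hsa : IsKMSSelfAdjoint σ hσ Φ) (hΦ : Φ ≠ 0) :
    ∃ V : Mat N, V ≠ 0 ∧ IsKMSKraus σ hσ V ∧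
      ∃ t : ℝ, 0 < t ∧ IsCP (Φ - (t : ℂ) • krausMap V) := by
  obtain ⟨H, hH0, hH, t, ht, hsub⟩ := exists_hermitian_posSemidef_choi_sub
    (isCP_iff_posSemidef_choi.mp (hcp.mpowSandwich_conj (1/4))) hsa.isHSSelfAdjoint_conj
    ((LinearEquiv.map_ne_zero_iff _).mpr hΦ)
  have hV := mpowSandwich_symm_conj_krausMap (σ := σ) (hσ := hσ) (1/4) H
  refine ⟨_, fun h0 => hH0 ?_, isKMSKraus_mpow_mul_mul_mpow hH, t, ht, ?_⟩
  · rwa [h0, krausMap_eq_zero_iff.mpr rfl, LinearEquiv.map_eq_zero_iff,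
      krausMap_eq_zero_iff] at hV
  · have := (isCP_iff_posSemidef_choi.mpr hsub).mpowSandwich_conj (σ := σ) (hσ := hσ) (-(1/4))
    rwa [← mpowSandwich_symm, map_sub, map_smul, LinearEquiv.conj_symm_conj, hV] at this

end KMS

theorem extremal_CP_KMS_iff_general (N : ℕ) (σ : Mat N) (hσ : σ.PosDef)
    (Φ : Mat N →ₗ[ℂ] Mat N)
    (hΦcp : IsCP Φ) (hΦsa : IsKMSSelfAdjoint σ hσ Φ) :
    (∀ Ψ : Mat N →ₗ[ℂ] Mat N, IsCP Ψ → IsKMSSelfAdjoint σ hσ Ψ →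
        ∀ t : ℝ, 0 < t → IsCP (Φ - (t : ℂ) • Ψ) → ∃ c : ℝ, 0 ≤ c ∧ Ψ = (c : ℂ) • Φ) ↔
      ∃ V : Mat N, mpow σ hσ (-(1/2)) * V * mpow σ hσ (1/2) = Vᴴ ∧
        ∀ A, Φ A = Vᴴ * A * V := by
  constructor
  · intro hext
    rcases eq_or_ne Φ 0 with rfl | hΦ
    · exact ⟨0, by simp, fun A => by simp⟩
    obtain ⟨V, hV0, hV, t, ht, hsub⟩ := exists_isKMSKraus_isCP_sub hΦcp hΦsa hΦ
    obtain ⟨c, hc, hVc⟩ := hext _ (isCP_krausMap V) hV.isKMSSelfAdjoint_krausMap t ht hsub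
    have hc0 : c ≠ 0 := by
      rintro rfl
      rw [Complex.ofReal_zero, zero_smul, krausMap_eq_zero_iff] at hVc
      exact hV0 hVc
    refine ⟨((√c⁻¹ : ℝ) : ℂ) • V, hV.real_smul _, fun A => ?_⟩
    rw [← krausMap_apply, krausMap_smul, hVc, smul_smul, Complex.star_def, Complex.conj_ofReal,
      ← Complex.ofReal_mul, ← Complex.ofReal_mul, Real.mul_self_sqrt (inv_nonneg.mpr hc),
      inv_mul_cancel₀ hc0, Complex.ofReal_one, one_smul]
  · rintro ⟨V, -, hΦV⟩ Ψ hΨ - t ht hsub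
    obtain rfl : Φ = krausMap V := LinearMap.ext hΦV
    exact hΨ.exists_eq_smul_krausMap ht hsub

/-- A CP map `Φ` on `M_N(ℂ)` that is self-adjoint with respect to the KMS
inner product is extremal in the cone `CP_KMS` if and only if `Φ(A) = Vᴴ A V` for some
`V` with `σ^{-1/2} V σ^{1/2} = Vᴴ`. -/
theorem extremal_CP_KMS_iff (N : ℕ) (hN : 2 ≤ N) (σ : Mat N) (hσ : σ.PosDef)
    (htr : σ.trace = 1) (Φ : Mat N →ₗ[ℂ] Mat N)
    (hΦcp : IsCP Φ) (hΦsa : IsKMSSelfAdjoint σ hσ Φ) :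
    (∀ Ψ : Mat N →ₗ[ℂ] Mat N, IsCP Ψ → IsKMSSelfAdjoint σ hσ Ψ →
        ∀ t : ℝ, 0 < t → IsCP (Φ - (t : ℂ) • Ψ) → ∃ c : ℝ, 0 ≤ c ∧ Ψ = (c : ℂ) • Φ) ↔
      ∃ V : Mat N, mpow σ hσ (-(1/2)) * V * mpow σ hσ (1/2) = Vᴴ ∧
        ∀ A, Φ A = Vᴴ * A * V :=
  extremal_CP_KMS_iff_general N σ hσ Φ hΦcp hΦsa
end
end

section
/- Let L be a Hermitian linear map on M_N(ℂ). Then both L and −L are QMS generators if and only if there exists a self-adjoint H ∈ M_N(ℂ) such that L(A) = i(HA − AH) for all A ∈ M_N(ℂ). -/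
/-!
If `e^{tL}` is unital and completely positive for every real `t`, the Kadison–Schwarz defect
`Φₜ(A*A) - Φₜ(A)*Φₜ(A)` of `Φₜ = e^{tL}` is positive semidefinite for all `t` and vanishes at
`t = 0`, so its derivative `L(A*A) - L(A*)A - A*L(A)` vanishes. By polarization `L` is a
derivation of `M_N(ℂ)`, hence inner, `L = [K, ·]`; Hermiticity of `L` makes `K + K*` central, so
the anti-Hermitian part of `K` already gives `L`, i.e. `H = (i/2)(K* - K)` works. Conversely, for
`L = i[H, ·]` the semigroup is conjugation by the unitary `e^{itH}`.
-/

open MeasureTheory Matrix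
open scoped ComplexOrder

noncomputable section

variable {N : ℕ}

/-- The standard basis of the matrix space. -/
def matBasis (N : ℕ) : Module.Basis (Fin N × Fin N) ℂ (Mat N) := Matrix.stdBasis ℂ (Fin N) (Fin N)

/-- The semigroup `e^{tL}` generated by a linear map `L` on `M_N(ℂ)`. -/
def semigroup (L : Mat N →ₗ[ℂ] Mat N) (t : ℝ) : Mat N →ₗ[ℂ] Mat N :=
  Matrix.toLin (matBasis N) (matBasis N)
    (NormedSpace.exp ((t : ℂ) • LinearMap.toMatrix (matBasis N) (matBasis N) L))

/-- `L` is a QMS generator: for every `t ≥ 0`, `e^{tL}` is completely positive and unital. -/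
def IsQMSGen (L : Mat N →ₗ[ℂ] Mat N) : Prop :=
  ∀ t : ℝ, 0 ≤ t → IsCP (semigroup L t) ∧ semigroup L t 1 = 1

open NormedSpace

attribute [local instance] Matrix.linftyOpNormedRing Matrix.linftyOpNormedAlgebra

/-- `IsAlt.neg` at `(x, y)` and at `(I • x, y)` gives `B y x = -B x y` and `B y x = B x y`. -/
theorem LinearMap.IsAlt.eq_zero_of_sesquilinear {M P : Type*} [AddCommGroup M] [Module ℂ M]
    [AddCommGroup P] [Module ℂ P] {B : M →ₗ⋆[ℂ] M →ₗ[ℂ] P} (hB : B.IsAlt) : B = 0 := by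
  ext x y
  have hxy := hB.neg x y
  have hIxy := hB.neg (Complex.I • x) y
  simp only [map_smulₛₗ, LinearMap.smul_apply, Complex.conj_I, RingHom.id_apply] at hIxy
  have h2 : (2 * Complex.I) • B x y = 0 := by
    linear_combination (norm := module) hIxy - Complex.I • hxy
  simpa using h2

theorem Matrix.eq_zero_of_forall_dotProduct_mulVec_self {n : Type*} [Fintype n] [DecidableEq n]
    {D : Matrix n n ℂ} (hD : ∀ x, star x ⬝ᵥ D *ᵥ x = 0) : D = 0 := by
  have hB : (Matrix.toLinearMapₛₗ₂' ℂ (starRingEnd ℂ) (RingHom.id ℂ) D).IsAlt := fun x => by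
    simpa [Matrix.toLinearMapₛₗ₂'_apply, dotProduct, mulVec, Finset.mul_sum, Finset.sum_mul,
      mul_left_comm, mul_comm] using hD x
  simpa using hB.eq_zero_of_sesquilinear

theorem Complex.eq_zero_of_hasDerivAt_of_nonneg {g : ℝ → ℂ} {g' : ℂ} {a : ℝ}
    (hg : HasDerivAt g g' a) (ha : g a = 0) (hnn : ∀ t, 0 ≤ g t) : g' = 0 := by
  have hmin : IsLocalMin (fun t => (g t).re) a :=
    Filter.Eventually.of_forall fun t => by simpa [ha] using (Complex.nonneg_iff.mp (hnn t)).1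
  have him : HasDerivAt (fun t => (g t).im) g'.im a :=
    Complex.imCLM.hasFDerivAt.comp_hasDerivAt a hg
  rw [show (fun t => (g t).im) = fun _ => 0 from
    funext fun t => (Complex.nonneg_iff.mp (hnn t)).2.symm] at him
  exact Complex.ext (hmin.hasDerivAt_eq_zero (Complex.reCLM.hasFDerivAt.comp_hasDerivAt a hg))
    (him.unique (hasDerivAt_const a 0))

theorem Matrix.eq_zero_of_hasDerivAt_of_posSemidef {n : Type*} [Fintype n] [DecidableEq n]
    {F : ℝ → Matrix n n ℂ} {D : Matrix n n ℂ} {a : ℝ} (hF : HasDerivAt F D a) (ha : F a = 0)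
    (hpos : ∀ t, (F t).PosSemidef) : D = 0 := by
  refine Matrix.eq_zero_of_forall_dotProduct_mulVec_self fun x => ?_
  let q : Matrix n n ℂ →ₗ[ℂ] ℂ :=
    { toFun M := star x ⬝ᵥ M *ᵥ x
      map_add' M M' := by simp [add_mulVec, dotProduct_add]
      map_smul' c M := by simp [smul_mulVec, dotProduct_smul] }
  have hq := (q.restrictScalars ℝ).toContinuousLinearMap.hasFDerivAt.comp_hasDerivAt a hF
  exact Complex.eq_zero_of_hasDerivAt_of_nonneg hq (by simp [q, ha])
    fun t => (hpos t).dotProduct_mulVec_nonneg x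

theorem map_mul_of_map_star_mul_self {A : Type*} [Ring A] [StarRing A] [Algebra ℂ A]
    [StarModule ℂ A] (L : A →ₗ[ℂ] A) (hL : ∀ a, L (star a * a) = L (star a) * a + star a * L a)
    (a b : A) : L (a * b) = L a * b + a * L b := by
  let B : A →ₗ⋆[ℂ] A →ₗ[ℂ] A := LinearMap.mk₂'ₛₗ (starRingEnd ℂ) (RingHom.id ℂ)
    (fun a b => L (star a * b) - (L (star a) * b + star a * L b))
    (fun a a' b => by simp only [star_add, add_mul, map_add]; abel)
    (fun c a b => by simp only [star_smul, smul_mul_assoc, map_smul, smul_add, smul_sub]; rfl)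
    (fun a b b' => by simp only [mul_add, map_add]; abel)
    (fun c a b => by simp only [mul_smul_comm, map_smul, smul_add, smul_sub]; rfl)
  have hB : B.IsAlt := fun a => sub_eq_zero.mpr (hL a)
  simpa [B, sub_eq_zero] using LinearMap.congr_fun₂ hB.eq_zero_of_sesquilinear (star a) b

theorem Matrix.exists_eq_commutator_of_map_mul {n R : Type*} [Fintype n] [DecidableEq n]
    [CommRing R] (δ : Matrix n n R →ₗ[R] Matrix n n R)
    (hδ : ∀ A B, δ (A * B) = δ A * B + A * δ B) : ∃ K, ∀ A, δ A = K * A - A * K := by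
  cases isEmpty_or_nonempty n
  · exact ⟨0, fun _ => Subsingleton.elim _ _⟩
  obtain ⟨z⟩ := ‹Nonempty n›
  set K := ∑ k, δ (single k z 1) * single z k 1
  have hleft : ∀ i j, K * single i j 1 = δ (single i z 1) * single z j 1 := fun i j => by
    rw [Finset.sum_mul, Finset.sum_eq_single i (fun k _ hk => by simp [mul_assoc, hk]) (by simp),
      mul_assoc, single_mul_single_same, one_mul]
  have hright : ∀ i j, single i j 1 * K = δ (single i z 1) * single z j 1 - δ (single i j 1) := by
    intro i j
    have hterm : ∀ k, single i j 1 * (δ (single k z 1) * single z k 1) =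
        δ (single i j 1 * single k z 1) * single z k 1 -
          δ (single i j 1) * (single k z 1 * single z k (1 : R)) := fun k => by
      rw [hδ]; noncomm_ring
    rw [Finset.mul_sum, Finset.sum_congr rfl fun k _ => hterm k, Finset.sum_sub_distrib,
      ← Finset.mul_sum, Finset.sum_eq_single j (fun k _ hk => by simp [Ne.symm hk]) (by simp)]
    simp [sum_single_one]
  refine ⟨K, fun A => ?_⟩
  suffices δ = LinearMap.mulLeft R K - LinearMap.mulRight R K by simp [this]
  refine Matrix.ext_linearMap R fun i j => LinearMap.ext_ring ?_
  simp [hleft, hright]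

theorem IsCP.map_conjTranspose {Φ : Mat N →ₗ[ℂ] Mat N} (hΦ : IsCP Φ) (A : Mat N) :
    Φ Aᴴ = (Φ A)ᴴ := by
  obtain ⟨M, V, hV⟩ := hΦ
  simp [hV, conjTranspose_sum, mul_assoc]

theorem IsCP.posSemidef_map_conjTranspose_mul_self_sub {Φ : Mat N →ₗ[ℂ] Mat N} (hΦ : IsCP Φ)
    (hΦ1 : Φ 1 = 1) (A : Mat N) : (Φ (Aᴴ * A) - (Φ A)ᴴ * Φ A).PosSemidef := by
  have hstar := hΦ.map_conjTranspose A
  obtain ⟨M, V, hV⟩ := hΦ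
  have hunit : ∑ j, (V j)ᴴ * V j = 1 := by simpa [hV] using hΦ1
  have hsum : Φ (Aᴴ * A) - (Φ A)ᴴ * Φ A =
      ∑ j, (A * V j - V j * Φ A)ᴴ * (A * V j - V j * Φ A) := by
    have hterm : ∀ j, (A * V j - V j * Φ A)ᴴ * (A * V j - V j * Φ A) =
        (V j)ᴴ * (Aᴴ * A) * V j - (V j)ᴴ * Aᴴ * V j * Φ A - (Φ A)ᴴ * ((V j)ᴴ * A * V j)
          + (Φ A)ᴴ * ((V j)ᴴ * V j) * Φ A := fun j => by
      simp only [conjTranspose_sub, conjTranspose_mul]; noncomm_ring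
    simp only [hterm, Finset.sum_add_distrib, Finset.sum_sub_distrib, ← Finset.sum_mul,
      ← Finset.mul_sum, ← hV, hstar, hunit]
    noncomm_ring
  rw [hsum]
  exact posSemidef_sum _ fun j _ => posSemidef_conjTranspose_mul_self _

theorem semigroup_neg (L : Mat N →ₗ[ℂ] Mat N) (t : ℝ) : semigroup (-L) t = semigroup L (-t) := by
  simp only [semigroup, map_neg, smul_neg, Complex.ofReal_neg, neg_smul]

theorem semigroup_zero (L : Mat N →ₗ[ℂ] Mat N) : semigroup L 0 = LinearMap.id := by
  simp [semigroup, Matrix.toLin_one]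

theorem hasDerivAt_semigroup_apply (L : Mat N →ₗ[ℂ] Mat N) (A : Mat N) :
    HasDerivAt (fun t : ℝ => semigroup L t A) (L A) 0 := by
  set M := LinearMap.toMatrix (matBasis N) (matBasis N) L
  let φ := LinearMap.toContinuousLinearMap
    ((LinearMap.applyₗ A).comp (Matrix.toLin (matBasis N) (matBasis N)).toLinearMap)
  have hexp := hasDerivAt_exp_smul_const' M (0 : ℂ)
  rw [zero_smul, exp_zero, mul_one] at hexp
  have hφ := φ.hasFDerivAt.comp_hasDerivAt 0 hexp
  rw [← Complex.ofReal_zero] at hφ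
  refine (hφ.scomp (0 : ℝ) Complex.ofRealCLM.hasDerivAt).congr_deriv ?_
  simp only [Complex.ofRealCLM_apply, Complex.ofReal_one, one_smul]
  exact LinearMap.congr_fun (Matrix.toLin_toMatrix (matBasis N) (matBasis N) L) A

theorem semigroup_eq_toMatrixAlgEquiv_symm_exp (L : Mat N →ₗ[ℂ] Mat N) (t : ℝ) :
    semigroup L t = (LinearMap.toMatrixAlgEquiv (matBasis N)).symm
      (exp (LinearMap.toMatrixAlgEquiv (matBasis N) ((t : ℂ) • L))) := by
  rw [map_smul]; rfl

theorem exp_toMatrixAlgEquiv_algHom_apply {A : Type*} [NormedRing A] [NormedAlgebra ℂ A]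
    [NormedAlgebra ℚ A] [CompleteSpace A] [FiniteDimensional ℂ A]
    (φ : A →ₐ[ℂ] Module.End ℂ (Mat N)) (a : A) :
    exp (LinearMap.toMatrixAlgEquiv (matBasis N) (φ a)) =
      LinearMap.toMatrixAlgEquiv (matBasis N) (φ (exp a)) := by
  let ψ := (LinearMap.toMatrixAlgEquiv (matBasis N)).toAlgHom.comp φ
  exact (map_exp ψ ψ.toLinearMap.continuous_of_finiteDimensional a).symm

theorem semigroup_apply_of_eq_commutator (L : Mat N →ₗ[ℂ] Mat N) (X : Mat N)
    (hL : ∀ A, L A = X * A - A * X) (t : ℝ) (A : Mat N) :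
    semigroup L t A = exp ((t : ℂ) • X) * A * exp (-((t : ℂ) • X)) := by
  set e := LinearMap.toMatrixAlgEquiv (matBasis N)
  set Y := (t : ℂ) • X
  let ρ : (Mat N)ᵐᵒᵖ →ₐ[ℂ] Module.End ℂ (Mat N) := Algebra.lsmul ℂ ℂ (Mat N)
  have hsplit : (t : ℂ) • L = Algebra.lmul ℂ (Mat N) Y + ρ (MulOpposite.op (-Y)) := by
    ext B : 1
    simp [ρ, Y, hL, sub_eq_add_neg]
  have hcomm : Commute (e (Algebra.lmul ℂ (Mat N) Y)) (e (ρ (MulOpposite.op (-Y)))) := by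
    refine Commute.map ?_ e
    ext B : 1
    simp [ρ, mul_assoc]
  rw [semigroup_eq_toMatrixAlgEquiv_symm_exp, hsplit, map_add, Matrix.exp_add_of_commute _ _ hcomm,
    exp_toMatrixAlgEquiv_algHom_apply, exp_toMatrixAlgEquiv_algHom_apply, exp_op, ← map_mul,
    AlgEquiv.symm_apply_apply]
  simp [ρ, mul_assoc]
  -- the two sides use `exp` for the product topology and for the operator-norm topology on `Mat N`
  rfl

theorem IsQMSGen.isCP_and_map_one {L : Mat N →ₗ[ℂ] Mat N} (hL : IsQMSGen L) (hL' : IsQMSGen (-L))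
    (t : ℝ) : IsCP (semigroup L t) ∧ semigroup L t 1 = 1 := by
  rcases le_total 0 t with ht | ht
  · exact hL t ht
  · simpa [semigroup_neg] using hL' (-t) (neg_nonneg.mpr ht)

theorem IsQMSGen.map_conjTranspose_mul_self {L : Mat N →ₗ[ℂ] Mat N} (hL : IsQMSGen L)
    (hL' : IsQMSGen (-L)) (A : Mat N) : L (Aᴴ * A) = L Aᴴ * A + Aᴴ * L A := by
  let F t := semigroup L t (Aᴴ * A) - semigroup L t Aᴴ * semigroup L t A
  have hF : HasDerivAt F (L (Aᴴ * A) - (L Aᴴ * A + Aᴴ * L A)) 0 := by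
    have hmul := (hasDerivAt_semigroup_apply L Aᴴ).mul (hasDerivAt_semigroup_apply L A)
    have h := (hasDerivAt_semigroup_apply L (Aᴴ * A)).sub hmul
    simp only [semigroup_zero, LinearMap.id_apply] at h
    exact h
  refine sub_eq_zero.mp
    (Matrix.eq_zero_of_hasDerivAt_of_posSemidef hF (by simp [F, semigroup_zero]) fun t => ?_)
  obtain ⟨hcp, hunital⟩ := hL.isCP_and_map_one hL' t
  simpa only [F, hcp.map_conjTranspose] using
    hcp.posSemidef_map_conjTranspose_mul_self_sub hunital A

theorem isQMSGen_of_eq_commutator (H : Mat N) (hH : H.IsHermitian) (L : Mat N →ₗ[ℂ] Mat N)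
    (hL : ∀ A, L A = Complex.I • (H * A - A * H)) : IsQMSGen L := by
  intro t _
  set X := (t : ℂ) • Complex.I • H
  have hX : Xᴴ = -X := by
    simp [X, conjTranspose_smul, hH.eq, smul_smul, mul_comm]
  have hsg : ∀ A, semigroup L t A = exp X * A * exp (-X) :=
    semigroup_apply_of_eq_commutator L (Complex.I • H) (fun A => by
      rw [hL, smul_sub, smul_mul_assoc, mul_smul_comm]) t
  have hU : exp (-X) = (exp X)ᴴ := by rw [← Matrix.exp_conjTranspose, hX]
  refine ⟨⟨1, fun _ => exp (-X), fun A => ?_⟩, ?_⟩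
  · simp [hsg, hU]
  · rw [hsg, mul_one, ← Matrix.exp_add_of_commute _ _ (Commute.refl X).neg_right,
      add_neg_cancel, exp_zero]

theorem exists_isHermitian_of_eq_commutator (L : Mat N →ₗ[ℂ] Mat N)
    (hherm : ∀ A, L Aᴴ = (L A)ᴴ) (K : Mat N) (hK : ∀ A, L A = K * A - A * K) :
    ∃ H : Mat N, H.IsHermitian ∧ ∀ A, L A = Complex.I • (H * A - A * H) := by
  have hcentral : ∀ A, Kᴴ * A - A * Kᴴ = A * K - K * A := fun A => by
    have h := hherm Aᴴ
    rw [conjTranspose_conjTranspose, hK, hK, conjTranspose_sub, conjTranspose_mul,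
      conjTranspose_mul, conjTranspose_conjTranspose] at h
    rw [← neg_sub (K * A), h, neg_sub]
  refine ⟨(Complex.I / 2) • (Kᴴ - K), ?_, fun A => ?_⟩
  · simp only [IsHermitian, conjTranspose_smul, conjTranspose_sub, conjTranspose_conjTranspose,
      star_div₀, Complex.star_def, Complex.conj_I, Complex.conj_ofNat]
    module
  · simp only [hK, smul_mul_assoc, mul_smul_comm, sub_mul, mul_sub, smul_sub, smul_smul,
      ← mul_div_assoc, Complex.I_mul_I]
    linear_combination (norm := module) (1 / 2 : ℂ) • hcentral A

theorem qms_gen_both_iff_commutator_general (N : ℕ)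
    (L : Mat N →ₗ[ℂ] Mat N) (hherm : ∀ A, L Aᴴ = (L A)ᴴ) :
    (IsQMSGen L ∧ IsQMSGen (-L)) ↔
      ∃ H : Mat N, H.IsHermitian ∧ ∀ A, L A = Complex.I • (H * A - A * H) := by
  constructor
  · rintro ⟨hL, hL'⟩
    obtain ⟨K, hK⟩ := Matrix.exists_eq_commutator_of_map_mul L
      (map_mul_of_map_star_mul_self L (hL.map_conjTranspose_mul_self hL'))
    exact exists_isHermitian_of_eq_commutator L hherm K hK
  · rintro ⟨H, hH, hLH⟩
    refine ⟨isQMSGen_of_eq_commutator H hH L hLH,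
      isQMSGen_of_eq_commutator (-H) hH.neg (-L) fun A => ?_⟩
    simp only [LinearMap.neg_apply, hLH, neg_mul, mul_neg, smul_sub, smul_neg]
    abel

/-- For a Hermitian linear map `L` on `M_N(ℂ)` (i.e. `L(Aᴴ) = (L A)ᴴ`), both
`L` and `-L` are QMS generators iff `L(A) = i(HA - AH)` for some self-adjoint `H`. -/
theorem qms_gen_both_iff_commutator (N : ℕ) (hN : 2 ≤ N)
    (L : Mat N →ₗ[ℂ] Mat N) (hherm : ∀ A, L Aᴴ = (L A)ᴴ) :
    (IsQMSGen L ∧ IsQMSGen (-L)) ↔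
      ∃ H : Mat N, H.IsHermitian ∧ ∀ A, L A = Complex.I • (H * A - A * H) :=
  qms_gen_both_iff_commutator_general N L hherm
end
end

section
/- Let u_1,…,u_N be an orthonormal basis of ℂ^N of eigenvectors of σ with σ u_j = λ_j u_j, and set E_{(i,j)} = √N |u_i⟩⟨u_j|. Let Φ be a Hermitian linear map on M_N(ℂ) with expansion Φ(A) = Σ_{α,β} c_{α,β} E_α* A E_β, where α, β range over {1,…,N}², and write α' = (α₂,α₁) for α = (α₁,α₂). Then for any probability measure m on [0,1], Φ is self-adjoint with respect to ⟨·,·⟩_m if and only if for all α,β: c_{α,β} = [(λ_{α₁},λ_{β₁})_m / (λ_{α₂},λ_{β₂})_m] · c_{β',α'}, where (x,y)_m = ∫₀¹ x^s y^{1−s} dm(s). -/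
open MeasureTheory Matrix
open scoped ComplexOrder

noncomputable section

variable {N : ℕ}

/-- `M_m(A) = ∫₀¹ σ^s A σ^{1-s} dm(s)`, defined entrywise. -/
def Mm (σ : Mat N) (hσ : σ.PosDef) (m : Measure ℝ) (A : Mat N) : Mat N :=
  Matrix.of fun i j => ∫ s, (mpow σ hσ s * A * mpow σ hσ (1 - s)) i j ∂m

/-- The inner product `⟨B,A⟩_m = Tr[Bᴴ M_m(A)]`. -/
def mInner (σ : Mat N) (hσ : σ.PosDef) (m : Measure ℝ) (B A : Mat N) : ℂ :=
  (Bᴴ * Mm σ hσ m A).trace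

/-- Self-adjointness with respect to the inner product `⟨·,·⟩_m`. -/
def IsSelfAdjointWrt (σ : Mat N) (hσ : σ.PosDef) (m : Measure ℝ)
    (Φ : Mat N →ₗ[ℂ] Mat N) : Prop :=
  ∀ A B, mInner σ hσ m B (Φ A) = mInner σ hσ m (Φ B) A

/-- The `m`-weighted mean `(x,y)_m = ∫₀¹ x^s y^{1-s} dm(s)`. -/
def wmean (m : Measure ℝ) (x y : ℝ) : ℝ := ∫ s, x ^ s * y ^ (1 - s) ∂m

/-!
In an orthonormal eigenbasis `u` of `σ`, the matrix units `|u_i⟩⟨u_j|` are eigenvectors of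
`A ↦ σ^s A σ^{1-s}` with eigenvalue `λ_i^s λ_j^{1-s}`, so `M_m` multiplies the `(i,j)`
coordinate `⟨u_i, A u_j⟩` by `(λ_i, λ_j)_m` and `⟨B, A⟩_m` becomes a weighted ℓ² inner product
of coordinates. Since `E_{(a,i)}ᴴ |u_a⟩⟨u_b| E_{(b,j)} = N |u_i⟩⟨u_j|`, in coordinates `Φ` is the
matrix `K_{(a,b),(i,j)} = N c_{(a,i),(b,j)}`, and self-adjointness for weights `w` reads
`K_{pq} w_q = conj K_{qp} w_p`. Hermiticity of `Φ` gives `conj K_{qp} = K_{q'p'}`, and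
reindexing yields the stated relation.
-/

section KetBra

variable {n : Type*}

def ketBra (v w : n → ℂ) : Matrix n n ℂ := vecMulVec v (star w)

lemma conjTranspose_ketBra (v w : n → ℂ) : (ketBra v w)ᴴ = ketBra w v := by
  simp [ketBra]

lemma ketBra_smul_smul (a b : ℂ) (v w : n → ℂ) :
    ketBra (a • v) (b • w) = (a * star b) • ketBra v w := by
  ext i j
  simp [ketBra, vecMulVec_apply]
  ring

lemma mul_ketBra_mul [Fintype n] (M P : Matrix n n ℂ) (v w : n → ℂ) :
    M * ketBra v w * P = ketBra (M *ᵥ v) (Pᴴ *ᵥ w) := by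
  rw [ketBra, mul_vecMulVec, vecMulVec_mul, ketBra, star_mulVec, conjTranspose_conjTranspose]

lemma ketBra_mul_mul_ketBra [Fintype n] (v w x y : n → ℂ) (M : Matrix n n ℂ) :
    ketBra v w * M * ketBra x y = (star w ⬝ᵥ M *ᵥ x) • ketBra v y := by
  rw [Matrix.mul_assoc, ketBra, ketBra, mul_vecMulVec, vecMulVec_mul_vecMulVec, vecMulVec_smul]
  rfl

lemma trace_mul_ketBra [Fintype n] (M : Matrix n n ℂ) (v w : n → ℂ) :
    (M * ketBra v w).trace = star w ⬝ᵥ M *ᵥ v := by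
  rw [ketBra, mul_vecMulVec, trace_vecMulVec, dotProduct_comm]

end KetBra

section Coordinates

variable {n : Type*} [Fintype n] {u : n → n → ℂ}

def basisCoeffs (u : n → n → ℂ) : Matrix n n ℂ →ₗ[ℂ] n × n → ℂ where
  toFun A p := star (u p.1) ⬝ᵥ A *ᵥ u p.2
  map_add' A B := by ext p; simp [add_mulVec, dotProduct_add]
  map_smul' c A := by ext p; simp [smul_mulVec, dotProduct_smul]

lemma basisCoeffs_apply (A : Matrix n n ℂ) (p : n × n) :
    basisCoeffs u A p = star (u p.1) ⬝ᵥ A *ᵥ u p.2 := rfl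

lemma basisCoeffs_conjTranspose (A : Matrix n n ℂ) (p : n × n) :
    basisCoeffs u Aᴴ p = star (basisCoeffs u A p.swap) := by
  rw [basisCoeffs_apply, basisCoeffs_apply, star_dotProduct, star_mulVec,
    conjTranspose_conjTranspose, ← dotProduct_mulVec]
  rfl

lemma star_basisCoeffs (B : Matrix n n ℂ) (p : n × n) :
    star (basisCoeffs u B p) = (Bᴴ * ketBra (u p.1) (u p.2)).trace := by
  rw [trace_mul_ketBra]
  exact (basisCoeffs_conjTranspose B p.swap).symm

variable [DecidableEq n] (horth : ∀ i j, star (u i) ⬝ᵥ u j = if i = j then 1 else 0)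
include horth

lemma basisCoeffs_ketBra (i j : n) :
    basisCoeffs u (ketBra (u i) (u j)) = Pi.single (i, j) 1 := by
  ext r
  rw [basisCoeffs_apply, ketBra, dotProduct_mulVec, vecMul_vecMulVec, smul_dotProduct, horth,
    horth, Pi.single_apply]
  simp only [smul_eq_mul, mul_ite, mul_one, mul_zero, Prod.ext_iff]
  grind

lemma sum_ketBra_self : ∑ i, ketBra (u i) (u i) = 1 := by
  set V : Matrix n n ℂ := of fun i j => u j i
  have hV : Vᴴ * V = 1 := by
    ext i j
    simpa [V, mul_apply, dotProduct, one_apply] using horth i j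
  calc ∑ i, ketBra (u i) (u i) = V * Vᴴ := by
        ext k l
        simp [V, ketBra, mul_apply, Matrix.sum_apply, vecMulVec_apply]
    _ = 1 := mul_eq_one_comm.mp hV

lemma sum_basisCoeffs_smul_ketBra (A : Matrix n n ℂ) :
    ∑ p, basisCoeffs u A p • ketBra (u p.1) (u p.2) = A := by
  symm
  calc A = (∑ i, ketBra (u i) (u i)) * A * ∑ j, ketBra (u j) (u j) := by
        rw [sum_ketBra_self horth, Matrix.one_mul, Matrix.mul_one]
    _ = ∑ i, ∑ j, ketBra (u i) (u i) * A * ketBra (u j) (u j) := by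
        rw [Finset.sum_mul, Finset.sum_mul]
        simp only [Finset.mul_sum]
    _ = _ := by
        rw [Fintype.sum_prod_type]
        simp only [ketBra_mul_mul_ketBra]
        rfl

lemma basisCoeffs_surjective : Function.Surjective (basisCoeffs u) := by
  intro a
  refine ⟨∑ p, a p • ketBra (u p.1) (u p.2), ?_⟩
  ext r
  simp [basisCoeffs_ketBra horth, Pi.single_apply]

end Coordinates

section Spectral

variable {n : Type*} [Fintype n]

lemma Matrix.PosDef.pos_of_mulVec_eq_smul {σ : Matrix n n ℂ} (hσ : σ.PosDef) {v : n → ℂ} {l : ℝ}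
    (hv : star v ⬝ᵥ v = 1) (h : σ *ᵥ v = (l : ℂ) • v) : 0 < l := by
  have hv0 : v ≠ 0 := by
    rintro rfl
    simp at hv
  have := hσ.dotProduct_mulVec_pos hv0
  rw [h, dotProduct_smul, hv, smul_eq_mul, mul_one] at this
  exact_mod_cast this

lemma diagonal_comp_mulVec_eq_smul [DecidableEq n] {d : n → ℝ} {w : n → ℂ} {l : ℝ}
    (h : diagonal (fun i => (d i : ℂ)) *ᵥ w = (l : ℂ) • w) (f : ℝ → ℝ) :
    diagonal (fun i => (f (d i) : ℂ)) *ᵥ w = (f l : ℂ) • w := by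
  funext i
  have hi := congrFun h i
  simp only [mulVec_diagonal, Pi.smul_apply, smul_eq_mul] at hi ⊢
  rcases eq_or_ne (w i) 0 with h0 | h0
  · simp [h0]
  · rw [show d i = l by exact_mod_cast mul_right_cancel₀ h0 hi]

lemma conj_diagonal_mulVec_eq_smul [DecidableEq n] {U : Matrix n n ℂ}
    (hU : U ∈ unitary (Matrix n n ℂ)) {d : n → ℝ} {v : n → ℂ} {l : ℝ}
    (h : (U * diagonal (fun i => (d i : ℂ)) * star U) *ᵥ v = (l : ℂ) • v) (f : ℝ → ℝ) :
    (U * diagonal (fun i => (f (d i) : ℂ)) * star U) *ᵥ v = (f l : ℂ) • v := by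
  have hdiag : diagonal (fun i => (d i : ℂ)) *ᵥ (star U *ᵥ v) = (l : ℂ) • (star U *ᵥ v) := by
    have := congrArg (star U *ᵥ ·) h
    simpa only [mulVec_mulVec, ← Matrix.mul_assoc, Unitary.star_mul_self_of_mem hU,
      Matrix.one_mul, mulVec_smul] using this
  rw [← mulVec_mulVec, ← mulVec_mulVec, diagonal_comp_mulVec_eq_smul hdiag, mulVec_smul,
    mulVec_mulVec, Unitary.mul_star_self_of_mem hU, one_mulVec]

end Spectral

section Powers

variable {σ : Mat N} (hσ : σ.PosDef)

lemma mpow_mulVec_of_mulVec_eq_smul (s : ℝ) {v : Fin N → ℂ} {l : ℝ}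
    (h : σ *ᵥ v = (l : ℂ) • v) : mpow σ hσ s *ᵥ v = ((l ^ s : ℝ) : ℂ) • v := by
  have hspec := hσ.1.spectral_theorem
  rw [Unitary.conjStarAlgAut_apply] at hspec
  rw [hspec] at h
  exact conj_diagonal_mulVec_eq_smul (Subtype.prop _) h (· ^ s)

lemma isHermitian_mpow (s : ℝ) : (mpow σ hσ s).IsHermitian :=
  isHermitian_mul_mul_conjTranspose _ (isHermitian_diagonal_of_self_adjoint _ (by
    ext i
    simp))

lemma mpow_mul_ketBra_mul_mpow (s t : ℝ) {v w : Fin N → ℂ} {l μ : ℝ}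
    (hv : σ *ᵥ v = (l : ℂ) • v) (hw : σ *ᵥ w = (μ : ℂ) • w) :
    mpow σ hσ s * ketBra v w * mpow σ hσ t = ((l ^ s * μ ^ t : ℝ) : ℂ) • ketBra v w := by
  rw [mul_ketBra_mul, (isHermitian_mpow hσ t).eq, mpow_mulVec_of_mulVec_eq_smul hσ s hv,
    mpow_mulVec_of_mulVec_eq_smul hσ t hw, ketBra_smul_smul, Complex.star_def,
    Complex.conj_ofReal, Complex.ofReal_mul]

end Powers

section WeightedMean

variable {m : Measure ℝ} [IsFiniteMeasure m] {x y : ℝ}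

lemma integrable_rpow_mul_rpow (hsupp : m (Set.Icc (0 : ℝ) 1)ᶜ = 0) (hx : 0 < x) (hy : 0 < y) :
    Integrable (fun s : ℝ => x ^ s * y ^ (1 - s)) m := by
  rw [← Measure.restrict_eq_self_of_ae_mem (mem_ae_iff.mpr hsupp)]
  refine ContinuousOn.integrableOn_compact isCompact_Icc (Continuous.continuousOn ?_)
  exact (continuous_const.rpow continuous_id fun _ => Or.inl hx.ne').mul
    (continuous_const.rpow (continuous_const.sub continuous_id) fun _ => Or.inl hy.ne')

lemma wmean_pos [NeZero m] (hsupp : m (Set.Icc (0 : ℝ) 1)ᶜ = 0) (hx : 0 < x) (hy : 0 < y) :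
    0 < wmean m x y := by
  have hpos : ∀ s : ℝ, 0 < x ^ s * y ^ (1 - s) := fun s => by positivity
  rw [wmean, integral_pos_iff_support_of_nonneg (fun s => (hpos s).le)
    (integrable_rpow_mul_rpow hsupp hx hy), Function.support_eq_univ fun s => (hpos s).ne']
  exact Measure.measure_univ_pos.mpr (NeZero.ne m)

end WeightedMean

section InnerProduct

variable {σ : Mat N} (hσ : σ.PosDef) {m : Measure ℝ} [IsFiniteMeasure m]
  {u : Fin N → Fin N → ℂ} {lam : Fin N → ℝ}
  (horth : ∀ i j, star (u i) ⬝ᵥ u j = if i = j then 1 else 0)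
  (heig : ∀ j, σ *ᵥ u j = (lam j : ℂ) • u j)
include horth heig

lemma Mm_eq_sum (hsupp : m (Set.Icc (0 : ℝ) 1)ᶜ = 0) (A : Mat N) :
    Mm σ hσ m A = ∑ p, ((wmean m (lam p.1) (lam p.2) : ℂ) * basisCoeffs u A p) •
      ketBra (u p.1) (u p.2) := by
  have hlam : ∀ i, 0 < lam i := fun i =>
    hσ.pos_of_mulVec_eq_smul (by simpa using horth i i) (heig i)
  have hsand : ∀ s, mpow σ hσ s * A * mpow σ hσ (1 - s) = ∑ p,
      (((lam p.1 ^ s * lam p.2 ^ (1 - s) : ℝ) : ℂ) * basisCoeffs u A p) •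
        ketBra (u p.1) (u p.2) := by
    intro s
    conv_lhs => rw [← sum_basisCoeffs_smul_ketBra horth A]
    simp only [Finset.mul_sum, Finset.sum_mul, Matrix.mul_smul, Matrix.smul_mul,
      mpow_mul_ketBra_mul_mpow hσ s (1 - s) (heig _) (heig _), smul_smul, mul_comm]
  ext k l
  simp only [Mm, of_apply, hsand, Matrix.sum_apply, Matrix.smul_apply, smul_eq_mul]
  rw [integral_finsetSum _ fun p _ =>
    ((integrable_rpow_mul_rpow hsupp (hlam _) (hlam _)).ofReal.mul_const _).mul_const _]
  refine Finset.sum_congr rfl fun p _ => ?_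
  rw [integral_mul_const, integral_mul_const, integral_complex_ofReal]
  rfl

lemma mInner_eq_sum (hsupp : m (Set.Icc (0 : ℝ) 1)ᶜ = 0) (A B : Mat N) :
    mInner σ hσ m B A = ∑ p, star (basisCoeffs u B p) * basisCoeffs u A p *
      (wmean m (lam p.1) (lam p.2) : ℂ) := by
  rw [mInner, Mm_eq_sum hσ horth heig hsupp, Matrix.mul_sum, trace_sum]
  refine Finset.sum_congr rfl fun p _ => ?_
  rw [Matrix.mul_smul, trace_smul, ← star_basisCoeffs, smul_eq_mul]
  ring

end InnerProduct

section CoeffMatrix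

variable {n : Type*}

def coeffMatrix (c : n × n → n × n → ℂ) : Matrix (n × n) (n × n) ℂ :=
  of fun p r => c (p.1, r.1) (p.2, r.2)

lemma smul_coeffMatrix_weighted_iff (c : n × n → n × n → ℂ) {κ x y : ℂ} (hκ : κ ≠ 0)
    (hy : y ≠ 0) (α β : n × n) :
    (κ • coeffMatrix c) (α.1, β.1) (α.2, β.2) * y =
        (κ • coeffMatrix c) (β.2, α.2) (β.1, α.1) * x ↔
      c α β = x / y * c (β.2, β.1) (α.2, α.1) := by
  simp only [coeffMatrix, Matrix.smul_apply, of_apply, smul_eq_mul]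
  rw [mul_assoc, mul_assoc, mul_right_inj' hκ, div_mul_eq_mul_div, eq_div_iff hy,
    mul_comm x]

variable [Fintype n] [DecidableEq n] {u : n → n → ℂ}
  (horth : ∀ i j, star (u i) ⬝ᵥ u j = if i = j then 1 else 0)
include horth

lemma basisCoeffs_sum_conjTranspose_mul_mul (k : ℂ) (c : n × n → n × n → ℂ) (A : Matrix n n ℂ) :
    basisCoeffs u (∑ α, ∑ β, c α β •
        ((k • ketBra (u α.1) (u α.2))ᴴ * A * (k • ketBra (u β.1) (u β.2)))) =
      basisCoeffs u A ᵥ* ((star k * k) • coeffMatrix c) := by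
  have hterm : ∀ α β : n × n,
      (k • ketBra (u α.1) (u α.2))ᴴ * A * (k • ketBra (u β.1) (u β.2)) =
        (star k * k * basisCoeffs u A (α.1, β.1)) • ketBra (u α.2) (u β.2) := by
    intro α β
    rw [conjTranspose_smul, conjTranspose_ketBra, Matrix.smul_mul, Matrix.mul_smul,
      Matrix.smul_mul, ketBra_mul_mul_ketBra, smul_smul, smul_smul, basisCoeffs_apply]
    ring_nf
  ext ⟨r₁, r₂⟩
  simp only [hterm, map_sum, map_smul, basisCoeffs_ketBra horth, Finset.sum_apply, Pi.smul_apply,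
    Pi.single_apply, smul_eq_mul, vecMul, dotProduct, Matrix.smul_apply, coeffMatrix, of_apply,
    Fintype.sum_prod_type, Prod.mk.injEq, ite_and, mul_ite, mul_one, mul_zero, Finset.sum_ite_eq,
    Finset.sum_ite_irrel, Finset.sum_const_zero, Finset.mem_univ, if_true]
  exact Finset.sum_congr rfl fun _ _ => Finset.sum_congr rfl fun _ _ => by ring

lemma coeffs_swap_eq_star_of_map_conjTranspose {Φ : Matrix n n ℂ → Matrix n n ℂ}
    {K : Matrix (n × n) (n × n) ℂ}
    (hherm : ∀ A, Φ Aᴴ = (Φ A)ᴴ) (hK : ∀ A, basisCoeffs u (Φ A) = basisCoeffs u A ᵥ* K)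
    (p r : n × n) : K p.swap r = star (K p r.swap) := by
  have h := congrArg (basisCoeffs u · r) (hherm (ketBra (u p.1) (u p.2)))
  simp only [basisCoeffs_conjTranspose, hK, conjTranspose_ketBra, basisCoeffs_ketBra horth,
    single_one_vecMul] at h
  exact h

end CoeffMatrix

lemma forall_sum_star_mul_vecMul_iff {ι R : Type*} [Fintype ι] [DecidableEq ι] [CommSemiring R]
    [StarRing R] (K : Matrix ι ι R) (w : ι → R) :
    (∀ a b : ι → R, ∑ r, star (b r) * (a ᵥ* K) r * w r = ∑ r, star ((b ᵥ* K) r) * a r * w r) ↔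
      ∀ p q, K p q * w q = star (K q p) * w p := by
  constructor
  · intro h p q
    simpa [Pi.single_apply, apply_ite star] using h (Pi.single p 1) (Pi.single q 1)
  · intro h a b
    calc ∑ r, star (b r) * (a ᵥ* K) r * w r
        = ∑ r, ∑ p, star (b r) * a p * (K p r * w r) := by
          simp only [vecMul, dotProduct, Finset.mul_sum, Finset.sum_mul]
          exact Finset.sum_congr rfl fun _ _ => Finset.sum_congr rfl fun _ _ => by ring
      _ = ∑ r, ∑ p, star (b r) * a p * (star (K r p) * w p) := by simp only [h]
      _ = ∑ r, star ((b ᵥ* K) r) * a r * w r := by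
          rw [Finset.sum_comm]
          simp only [vecMul, dotProduct, star_sum, star_mul', Finset.sum_mul]
          exact Finset.sum_congr rfl fun _ _ => Finset.sum_congr rfl fun _ _ => by ring

section SelfAdjoint

variable {σ : Mat N} (hσ : σ.PosDef) {m : Measure ℝ} [IsFiniteMeasure m]
  {u : Fin N → Fin N → ℂ} {lam : Fin N → ℝ}

lemma isSelfAdjointWrt_iff_forall_weighted
    (horth : ∀ i j, star (u i) ⬝ᵥ u j = if i = j then 1 else 0)
    (heig : ∀ j, σ *ᵥ u j = (lam j : ℂ) • u j) (hsupp : m (Set.Icc (0 : ℝ) 1)ᶜ = 0)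
    {Φ : Mat N →ₗ[ℂ] Mat N} {K : Matrix (Fin N × Fin N) (Fin N × Fin N) ℂ}
    (hK : ∀ A, basisCoeffs u (Φ A) = basisCoeffs u A ᵥ* K) :
    IsSelfAdjointWrt σ hσ m Φ ↔ ∀ p q,
      K p q * wmean m (lam q.1) (lam q.2) = star (K q p) * wmean m (lam p.1) (lam p.2) := by
  simp only [IsSelfAdjointWrt, mInner_eq_sum hσ horth heig hsupp, hK]
  rw [← forall_sum_star_mul_vecMul_iff]
  refine ⟨fun h a b => ?_, fun h A B => h _ _⟩
  obtain ⟨A, rfl⟩ := basisCoeffs_surjective horth a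
  obtain ⟨B, rfl⟩ := basisCoeffs_surjective horth b
  exact h A B

end SelfAdjoint

theorem selfAdjointWrt_iff_coeffs_general (N : ℕ) (σ : Mat N) (hσ : σ.PosDef)
    (m : Measure ℝ) (hm : IsProbabilityMeasure m)
    (hsupp : m (Set.Icc (0:ℝ) 1)ᶜ = 0)
    (u : Fin N → (Fin N → ℂ)) (lam : Fin N → ℝ)
    (horth : ∀ i j, star (u i) ⬝ᵥ u j = if i = j then 1 else 0)
    (heig : ∀ j, σ *ᵥ u j = (lam j : ℂ) • u j)
    (E : Fin N × Fin N → Mat N)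
    (hE : ∀ α, E α = (Real.sqrt N : ℂ) • Matrix.vecMulVec (u α.1) (star (u α.2)))
    (Φ : Mat N →ₗ[ℂ] Mat N) (hherm : ∀ A, Φ Aᴴ = (Φ A)ᴴ)
    (c : Fin N × Fin N → Fin N × Fin N → ℂ)
    (hrep : ∀ A, Φ A = ∑ α : Fin N × Fin N, ∑ β : Fin N × Fin N, c α β • ((E α)ᴴ * A * E β)) :
    IsSelfAdjointWrt σ hσ m Φ ↔
      ∀ α β : Fin N × Fin N,
        c α β = ((wmean m (lam α.1) (lam β.1) / wmean m (lam α.2) (lam β.2) : ℝ) : ℂ) *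
          c (β.2, β.1) (α.2, α.1) := by
  have := hm
  have hK : ∀ A, basisCoeffs u (Φ A) = basisCoeffs u A ᵥ* ((N : ℂ) • coeffMatrix c) := by
    intro A
    have hN : star (Real.sqrt N : ℂ) * Real.sqrt N = N := by
      rw [Complex.star_def, Complex.conj_ofReal, ← Complex.ofReal_mul,
        Real.mul_self_sqrt (Nat.cast_nonneg N), Complex.ofReal_natCast]
    simp only [hrep, hE]
    rw [← hN]
    exact basisCoeffs_sum_conjTranspose_mul_mul horth _ c A
  have hstar : ∀ p q,
      star (((N : ℂ) • coeffMatrix c) q p) = ((N : ℂ) • coeffMatrix c) q.swap p.swap := fun p q =>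
    (coeffs_swap_eq_star_of_map_conjTranspose horth hherm hK q p.swap).symm
  have hlam : ∀ i, 0 < lam i := fun i =>
    hσ.pos_of_mulVec_eq_smul (by simpa using horth i i) (heig i)
  have hW : ∀ i j, (wmean m (lam i) (lam j) : ℂ) ≠ 0 := fun i j => by
    exact_mod_cast (wmean_pos hsupp (hlam i) (hlam j)).ne'
  rw [isSelfAdjointWrt_iff_forall_weighted hσ horth heig hsupp hK]
  simp only [hstar, Complex.ofReal_div]
  constructor
  · rintro h ⟨i, j⟩ ⟨k, l⟩
    exact (smul_coeffMatrix_weighted_iff c (Nat.cast_ne_zero.mpr i.pos.ne') (hW j l)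
      (i, j) (k, l)).1 (h _ _)
  · rintro h ⟨i, j⟩ ⟨k, l⟩
    exact (smul_coeffMatrix_weighted_iff c (Nat.cast_ne_zero.mpr i.pos.ne') (hW k l)
      (i, k) (j, l)).2 (h _ _)

/-- characterization of self-adjointness with respect to `⟨·,·⟩_m` in terms of
the coefficients of the expansion of `Φ` in the matrix-unit basis attached to an
orthonormal eigenbasis of `σ`. -/
theorem selfAdjointWrt_iff_coeffs (N : ℕ) (hN : 2 ≤ N) (σ : Mat N) (hσ : σ.PosDef)
    (htr : σ.trace = 1) (m : Measure ℝ) (hm : IsProbabilityMeasure m)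
    (hsupp : m (Set.Icc (0:ℝ) 1)ᶜ = 0)
    (u : Fin N → (Fin N → ℂ)) (lam : Fin N → ℝ)
    (horth : ∀ i j, star (u i) ⬝ᵥ u j = if i = j then 1 else 0)
    (heig : ∀ j, σ *ᵥ u j = (lam j : ℂ) • u j)
    (E : Fin N × Fin N → Mat N)
    (hE : ∀ α, E α = (Real.sqrt N : ℂ) • Matrix.vecMulVec (u α.1) (star (u α.2)))
    (Φ : Mat N →ₗ[ℂ] Mat N) (hherm : ∀ A, Φ Aᴴ = (Φ A)ᴴ)
    (c : Fin N × Fin N → Fin N × Fin N → ℂ)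
    (hrep : ∀ A, Φ A = ∑ α : Fin N × Fin N, ∑ β : Fin N × Fin N, c α β • ((E α)ᴴ * A * E β)) :
    IsSelfAdjointWrt σ hσ m Φ ↔
      ∀ α β : Fin N × Fin N,
        c α β = ((wmean m (lam α.1) (lam β.1) / wmean m (lam α.2) (lam β.2) : ℝ) : ℂ) *
          c (β.2, β.1) (α.2, α.1) :=
  selfAdjointWrt_iff_coeffs_general N σ hσ m hm hsupp u lam horth heig E hE Φ hherm c hrep
end
end

section
/- Let m be an even probability measure on [0,1] and let x, y > 0 with x ≠ y. Then √(xy) ≤ ∫₀¹ x^s y^{1−s} dm(s), with equality if and only if m is the point mass δ_{1/2} at s = 1/2. -/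
/-!
Write `x ^ s * y ^ (1 - s) = √(x y) * exp ((s - 1/2) * log (x / y))`. Since `m` is even, averaging
the integrand with its reflection under `s ↦ 1 - s` does not change the integral, which thus
becomes `√(x y) * ∫ cosh ((s - 1/2) * log (x / y)) dm`. As `cosh ≥ 1` with equality only at `0`,
and `log (x / y) ≠ 0`, this is at least `√(x y)`, with equality iff `m`-almost every `s` is `1/2`.
-/

open MeasureTheory Real

theorem rpow_mul_rpow_one_sub_eq {x y : ℝ} (hx : 0 < x) (hy : 0 < y) (s : ℝ) :
    x ^ s * y ^ (1 - s) = √(x * y) * exp ((s - 1 / 2) * log (x / y)) := by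
  rw [rpow_def_of_pos hx, rpow_def_of_pos hy, sqrt_eq_rpow, rpow_def_of_pos (mul_pos hx hy),
    ← exp_add, ← exp_add, log_mul hx.ne' hy.ne', log_div hx.ne' hy.ne']
  ring_nf

theorem Continuous.integrable_of_measure_compl_eq_zero {X E : Type*} [TopologicalSpace X]
    [T2Space X] [MeasurableSpace X] [OpensMeasurableSpace X] [NormedAddCommGroup E]
    {μ : Measure X} [IsFiniteMeasureOnCompacts μ] {K : Set X} (hK : IsCompact K)
    (hKc : μ Kᶜ = 0) {f : X → E} (hf : Continuous f) : Integrable f μ := by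
  rw [← Measure.restrict_eq_self_of_ae_mem (mem_ae_iff.mpr hKc)]
  exact hf.continuousOn.integrableOn_compact hK

theorem Real.cosh_eq_one_iff {x : ℝ} : cosh x = 1 ↔ x = 0 :=
  ⟨fun h => by_contra fun hx => (one_lt_cosh.mpr hx).ne' h, fun h => h ▸ cosh_zero⟩

section Even

variable {E : Type*} [NormedAddCommGroup E] [NormedSpace ℝ E] {m : Measure ℝ}

theorem measurePreserving_one_sub (heven : m.map (fun s => 1 - s) = m) :
    MeasurePreserving (fun s : ℝ => 1 - s) m m :=
  ⟨measurable_const.sub measurable_id, heven⟩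

theorem integral_comp_one_sub_of_map_eq (heven : m.map (fun s => 1 - s) = m) (f : ℝ → E) :
    ∫ s, f (1 - s) ∂m = ∫ s, f s ∂m :=
  (measurePreserving_one_sub heven).integral_comp
    (Homeomorph.subLeft (1 : ℝ)).measurableEmbedding f

theorem integral_eq_integral_half_smul_add_comp_one_sub (heven : m.map (fun s => 1 - s) = m)
    {f : ℝ → E} (hf : Integrable f m) :
    ∫ s, f s ∂m = ∫ s, (1 / 2 : ℝ) • (f s + f (1 - s)) ∂m := by
  have hf' : Integrable (fun s => f (1 - s)) m :=
    (measurePreserving_one_sub heven).integrable_comp_emb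
      (Homeomorph.subLeft (1 : ℝ)).measurableEmbedding |>.mpr hf
  rw [integral_smul, integral_add hf hf', integral_comp_one_sub_of_map_eq heven, ← two_smul ℝ,
    smul_smul]
  norm_num

theorem integral_exp_eq_integral_cosh (heven : m.map (fun s => 1 - s) = m)
    {c : ℝ} (hint : Integrable (fun s => exp ((s - 1 / 2) * c)) m) :
    ∫ s, exp ((s - 1 / 2) * c) ∂m = ∫ s, cosh ((s - 1 / 2) * c) ∂m := by
  rw [integral_eq_integral_half_smul_add_comp_one_sub heven hint]
  congr 1 with s
  rw [cosh_eq, smul_eq_mul]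
  ring_nf

end Even

theorem one_le_integral_and_eq_one_iff {α : Type*} [MeasurableSpace α] {μ : Measure α}
    [IsProbabilityMeasure μ] {f : α → ℝ} (hf : Integrable f μ) (h1 : ∀ a, 1 ≤ f a) :
    1 ≤ ∫ a, f a ∂μ ∧ (∫ a, f a ∂μ = 1 ↔ ∀ᵐ a ∂μ, f a = 1) := by
  have hconst : ∫ _, (1 : ℝ) ∂μ = 1 := by simp
  refine ⟨hconst ▸ integral_mono (integrable_const 1) hf h1, ?_⟩
  have h := integral_eq_iff_of_ae_le (integrable_const 1) hf (.of_forall h1)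
  rw [hconst, eq_comm] at h
  exact h.trans (Filter.eventually_congr (.of_forall fun a => eq_comm))

theorem ae_eq_iff_eq_dirac {α : Type*} [MeasurableSpace α] [MeasurableSingletonClass α]
    {μ : Measure α} [IsProbabilityMeasure μ] {a : α} : (∀ᵐ x ∂μ, x = a) ↔ μ = .dirac a :=
  (ProbabilityTheory.hasLaw_dirac_iff (X := id)).symm.trans
    ⟨fun h => by simpa using h.map_eq, fun h => h ▸ ProbabilityTheory.HasLaw.id⟩

/-- for an even probability measure `m` on `[0,1]` and `x ≠ y` positive,
`√(xy) ≤ ∫₀¹ x^s y^{1-s} dm(s)`, with equality iff `m` is the point mass at `1/2`. -/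
theorem sqrt_le_weighted_mean (m : Measure ℝ) (hm : IsProbabilityMeasure m)
    (hsupp : m (Set.Icc (0:ℝ) 1)ᶜ = 0)
    (heven : m.map (fun s => 1 - s) = m)
    (x y : ℝ) (hx : 0 < x) (hy : 0 < y) (hxy : x ≠ y) :
    Real.sqrt (x * y) ≤ (∫ s, x ^ s * y ^ (1 - s) ∂m) ∧
      ((∫ s, x ^ s * y ^ (1 - s) ∂m) = Real.sqrt (x * y) ↔ m = Measure.dirac (1/2)) := by
  have hc : log (x / y) ≠ 0 := by
    rw [log_div hx.ne' hy.ne', sub_ne_zero]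
    exact fun h => hxy (log_injOn_pos hx hy h)
  have hint {f : ℝ → ℝ} (hf : Continuous f) : Integrable f m :=
    hf.integrable_of_measure_compl_eq_zero isCompact_Icc hsupp
  have hmean : ∫ s, x ^ s * y ^ (1 - s) ∂m =
      √(x * y) * ∫ s, cosh ((s - 1 / 2) * log (x / y)) ∂m := by
    simp_rw [rpow_mul_rpow_one_sub_eq hx hy]
    rw [integral_const_mul, integral_exp_eq_integral_cosh heven (hint (by fun_prop))]
  obtain ⟨hle, heq⟩ := one_le_integral_and_eq_one_iff
    (f := fun s => cosh ((s - 1 / 2) * log (x / y))) (hint (by fun_prop)) fun s => one_le_cosh _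
  have hsqrt : 0 < √(x * y) := sqrt_pos.mpr (mul_pos hx hy)
  rw [hmean, mul_eq_left₀ hsqrt.ne', heq, ← ae_eq_iff_eq_dirac]
  refine ⟨le_mul_of_one_le_right hsqrt.le hle, Filter.eventually_congr (.of_forall fun s => ?_)⟩
  simp [cosh_eq_one_iff, hc, sub_eq_zero]
end

section
/- Let Φ(A) = Σ_{j=1}^M V_j* A V_j be a minimal Kraus representation of a completely positive map Φ on M_N(ℂ). Then Φ is orthogonal, in the Hilbert–Schmidt inner product on linear maps on M_N(ℂ), to every map of the form A ↦ XA + AY (X, Y ∈ M_N(ℂ)) if and only if Tr[V_j] = 0 for every j. -/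
/-! In the basis of matrix units, the Hilbert–Schmidt pairing of `A ↦ P A Q` with `A ↦ R A S`
is `Tr[Pᴴ R] · Tr[S Qᴴ]`. Summing over the Kraus operators, the pairing of `Φ` with
`A ↦ XA + AY` becomes `N⁻² (Tr[W X] + Tr[Y Wᴴ])` where `W = Σⱼ conj(Tr Vⱼ) Vⱼ`. This vanishes for
all `X, Y` iff `W = 0`, and by linear independence of the `Vⱼ` that means `Tr Vⱼ = 0` for all `j`.
-/

open MeasureTheory Matrix
open scoped ComplexOrder

noncomputable section

variable {N : ℕ}

/-- The normalized Hilbert–Schmidt inner product of two linear maps on `M_N(ℂ)`, computed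
in the orthonormal basis `{√N E_{ij}}` of `M_N(ℂ)` (for `⟨B,A⟩ = N⁻¹ Tr[BᴴA]`). -/
def superInner (Ψ Φ : Mat N →ₗ[ℂ] Mat N) : ℂ :=
  ((N : ℂ) ^ 2)⁻¹ * ∑ p : Fin N × Fin N, (N : ℂ)⁻¹ *
    (((Ψ ((Real.sqrt N : ℂ) • Matrix.single p.1 p.2 1))ᴴ *
      (Φ ((Real.sqrt N : ℂ) • Matrix.single p.1 p.2 1))).trace)

/-- Orthogonality, in the Hilbert–Schmidt inner product on linear maps, to every map of the
form `A ↦ XA + AY`. -/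
def OrthToSandwichFree (Φ : Mat N →ₗ[ℂ] Mat N) : Prop :=
  ∀ X Y : Mat N, superInner Φ (LinearMap.mulLeft ℂ X + LinearMap.mulRight ℂ Y) = 0

namespace Matrix

variable {n α : Type*} [Fintype n] [DecidableEq n] [CommSemiring α] [StarRing α]

theorem sum_trace_conjTranspose_mul_single_sandwich (P Q R S : Matrix n n α) :
    ∑ p : n × n, ((P * single p.1 p.2 1 * Q)ᴴ * (R * single p.1 p.2 1 * S)).trace
      = (Pᴴ * R).trace * (S * Qᴴ).trace := by
  have hterm : ∀ i j, ((P * single i j 1 * Q)ᴴ * (R * single i j 1 * S)).trace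
      = (Pᴴ * R) i i * (S * Qᴴ) j j := by
    intro i j
    calc ((P * single i j 1 * Q)ᴴ * (R * single i j 1 * S)).trace
        = (Qᴴ * (single j i 1 * (Pᴴ * R) * single i j 1) * S).trace := by
          simp only [conjTranspose_mul, conjTranspose_single, star_one, Matrix.mul_assoc]
      _ = (single j j ((Pᴴ * R) i i) * (S * Qᴴ)).trace := by
          rw [single_mul_mul_single, one_mul, mul_one, trace_mul_cycle, trace_mul_comm]
      _ = (Pᴴ * R) i i * (S * Qᴴ) j j := trace_single_mul _ _ _ _
  simp only [Fintype.sum_prod_type, hterm, ← Finset.mul_sum, ← Finset.sum_mul]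
  rfl

end Matrix

theorem superInner_eq_sum_trace (Ψ Φ : Mat N →ₗ[ℂ] Mat N) :
    superInner Ψ Φ = ((N : ℂ) ^ 2)⁻¹ *
      ∑ p : Fin N × Fin N, ((Ψ (single p.1 p.2 1))ᴴ * Φ (single p.1 p.2 1)).trace := by
  unfold superInner
  congr 1
  refine Finset.sum_congr rfl fun p _ => ?_
  have hN : (N : ℂ) ≠ 0 := Nat.cast_ne_zero.2 p.1.pos.ne'
  have hsqrt : star (Real.sqrt N : ℂ) * (Real.sqrt N : ℂ) = N := by
    rw [Complex.star_def, Complex.conj_ofReal, ← Complex.ofReal_mul,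
      Real.mul_self_sqrt (Nat.cast_nonneg N), Complex.ofReal_natCast]
  simp only [map_smul, conjTranspose_smul, smul_mul_smul_comm, trace_smul, smul_eq_mul, hsqrt,
    ← mul_assoc, inv_mul_cancel₀ hN, one_mul]

section Kraus

variable {ι : Type*} [Fintype ι] {Φ : Mat N →ₗ[ℂ] Mat N} {V : ι → Mat N}

theorem superInner_mulLeft_add_mulRight_of_kraus (hrep : ∀ A, Φ A = ∑ k, (V k)ᴴ * A * V k)
    (X Y : Mat N) :
    superInner Φ (LinearMap.mulLeft ℂ X + LinearMap.mulRight ℂ Y)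
      = ((N : ℂ) ^ 2)⁻¹ * (((∑ k, star (V k).trace • V k) * X).trace
          + (Y * (∑ k, star (V k).trace • V k)ᴴ).trace) := by
  rw [superInner_eq_sum_trace]
  congr 1
  have hsandwich : ∀ A : Mat N, X * A + A * Y = X * A * 1 + 1 * A * Y := fun A => by
    rw [Matrix.mul_one, Matrix.one_mul]
  calc ∑ p : Fin N × Fin N, ((Φ (single p.1 p.2 1))ᴴ *
          (LinearMap.mulLeft ℂ X + LinearMap.mulRight ℂ Y) (single p.1 p.2 1)).trace
      = ∑ k, ∑ p : Fin N × Fin N,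
          ((((V k)ᴴ * single p.1 p.2 1 * V k)ᴴ * (X * single p.1 p.2 1 * 1)).trace
          + (((V k)ᴴ * single p.1 p.2 1 * V k)ᴴ * (1 * single p.1 p.2 1 * Y)).trace) := by
        simp only [hrep, LinearMap.add_apply, LinearMap.mulLeft_apply, LinearMap.mulRight_apply,
          hsandwich, conjTranspose_sum, Finset.sum_mul, mul_add, trace_add, trace_sum,
          Finset.sum_add_distrib]
        congr 1 <;> exact Finset.sum_comm
    _ = ∑ k, ((V k * X).trace * star (V k).trace + (V k).trace * (Y * (V k)ᴴ).trace) := by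
        simp only [Finset.sum_add_distrib, sum_trace_conjTranspose_mul_single_sandwich]
        simp only [conjTranspose_conjTranspose, mul_one, one_mul, trace_conjTranspose]
    _ = _ := by
        simp only [Finset.sum_mul, Finset.mul_sum, conjTranspose_sum, conjTranspose_smul,
          star_star, trace_sum, smul_mul_assoc, mul_smul_comm, trace_smul, smul_eq_mul,
          ← Finset.sum_add_distrib]
        exact Finset.sum_congr rfl fun k _ => by ring

theorem orthToSandwichFree_iff_of_kraus (hrep : ∀ A, Φ A = ∑ k, (V k)ᴴ * A * V k) :
    OrthToSandwichFree Φ ↔ ∑ k, star (V k).trace • V k = 0 := by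
  simp only [OrthToSandwichFree, superInner_mulLeft_add_mulRight_of_kraus hrep]
  constructor
  · intro horth
    ext a b
    have hN : ((N : ℂ) ^ 2)⁻¹ ≠ 0 := inv_ne_zero (pow_ne_zero 2 (Nat.cast_ne_zero.2 a.pos.ne'))
    simpa [trace_mul_single, hN] using horth (single b a 1) 0
  · intro hW X Y
    rw [hW, Matrix.zero_mul, conjTranspose_zero, Matrix.mul_zero, trace_zero, add_zero, mul_zero]

end Kraus

theorem orth_sandwichFree_iff_traceless_general (N : ℕ)
    (Φ : Mat N →ₗ[ℂ] Mat N) (M : ℕ) (V : Fin M → Mat N)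
    (hmin : LinearIndependent ℂ V)
    (hrep : ∀ A, Φ A = ∑ j, (V j)ᴴ * A * V j) :
    OrthToSandwichFree Φ ↔ ∀ j, (V j).trace = 0 := by
  rw [orthToSandwichFree_iff_of_kraus hrep]
  constructor
  · intro hW j
    simpa using Fintype.linearIndependent_iff.mp hmin _ hW j
  · intro htr
    simp [htr]

/-- a CP map with minimal Kraus representation `Φ(A) = Σ_j Vⱼᴴ A Vⱼ` is
orthogonal to every map of the form `A ↦ XA + AY` iff `Tr[Vⱼ] = 0` for every `j`. -/
theorem orth_sandwichFree_iff_traceless (N : ℕ) (hN : 2 ≤ N)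
    (Φ : Mat N →ₗ[ℂ] Mat N) (M : ℕ) (V : Fin M → Mat N)
    (hmin : LinearIndependent ℂ V)
    (hrep : ∀ A, Φ A = ∑ j, (V j)ᴴ * A * V j) :
    OrthToSandwichFree Φ ↔ ∀ j, (V j).trace = 0 :=
  orth_sandwichFree_iff_traceless_general N Φ M V hmin hrep
end
end

section
/- Define the unital completely positive map Ψ on M_N(ℂ) by Ψ(A) = ∫₀^∞ (σ^{1/2}(t+σ)^{−1}) A (σ^{1/2}(t+σ)^{−1}) dt. Then the map Φ ↦ Ψ∘Φ is an injective map from the set of completely positive maps that are self-adjoint with respect to the KMS inner product into the set of completely positive maps that are self-adjoint with respect to the BKM inner product, and it takes unital maps to unital maps. -/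
open MeasureTheory Matrix
open scoped ComplexOrder

noncomputable section

variable {N : ℕ}

/-- Complete positivity of a map on `M_N(ℂ)`: existence of a Kraus representation. -/
def IsCPFun (Φ : Mat N → Mat N) : Prop :=
  ∃ (M : ℕ) (V : Fin M → Mat N), ∀ A, Φ A = ∑ j, (V j)ᴴ * A * V j

/-- Self-adjointness with respect to the KMS inner product. -/
def IsKMSSelfAdjointFun (σ : Mat N) (hσ : σ.PosDef) (Φ : Mat N → Mat N) : Prop :=
  ∀ A B, kmsInner σ hσ B (Φ A) = kmsInner σ hσ (Φ B) A

/-- The BKM inner product `⟨B,A⟩_BKM = ∫₀¹ Tr[Bᴴ σ^s A σ^{1-s}] ds`. -/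
def bkmInner (σ : Mat N) (hσ : σ.PosDef) (B A : Mat N) : ℂ :=
  ∫ s in (0:ℝ)..1, (Bᴴ * mpow σ hσ s * A * mpow σ hσ (1 - s)).trace

/-- Self-adjointness with respect to the BKM inner product. -/
def IsBKMSelfAdjointFun (σ : Mat N) (hσ : σ.PosDef) (Φ : Mat N → Mat N) : Prop :=
  ∀ A B, bkmInner σ hσ B (Φ A) = bkmInner σ hσ (Φ B) A

/-- The map `Ψ(A) = ∫₀^∞ (σ^{1/2}(t+σ)⁻¹) A (σ^{1/2}(t+σ)⁻¹) dt` (entrywise integral). -/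
def PsiBKM (σ : Mat N) (hσ : σ.PosDef) (A : Mat N) : Mat N :=
  Matrix.of fun i j =>
    ∫ t in Set.Ioi (0:ℝ),
      ((mpow σ hσ (1/2) * ((t : ℂ) • (1 : Mat N) + σ)⁻¹) * A *
        (mpow σ hσ (1/2) * ((t : ℂ) • (1 : Mat N) + σ)⁻¹)) i j

open Real Set Filter Topology

/-! In an eigenbasis of `σ` with eigenvalues `λᵢ`, `Ψ` is the Schur multiplier with symbol
`cᵢⱼ = √(λᵢλⱼ) ∫₀^∞ dt / ((t + λᵢ)(t + λⱼ))`, while the KMS and BKM inner products are weighted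
Hilbert–Schmidt products with weights `√(λᵢλⱼ)` and the logarithmic mean
`L(λᵢ, λⱼ) = ∫₀¹ λᵢ^s λⱼ^(1-s) ds`. As `∫₀^∞ dt / ((t + a)(t + b)) = 1 / L(a, b)`, this gives
`⟨B, Ψ A⟩_BKM = ⟨B, A⟩_KMS = ⟨Ψ B, A⟩_BKM`, which turns KMS self-adjointness of `Φ` into BKM
self-adjointness of `Ψ ∘ Φ`. The symbol is the Gram matrix of the functions `t ↦ √λᵢ / (t + λᵢ)`
in `L²(0, ∞)`, hence positive semidefinite, which makes `Ψ` completely positive; its diagonal is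
`1` and its entries are nonzero, whence unitality and injectivity. -/

section LogMean

variable {a b : ℝ}

def resolventIntegral (a b : ℝ) : ℝ := ∫ t in Ioi 0, ((t + a) * (t + b))⁻¹

def logMean (a b : ℝ) : ℝ := ∫ s in (0 : ℝ)..1, a ^ s * b ^ (1 - s)

lemma log_sub_log_ne_zero (ha : 0 < a) (hb : 0 < b) (hab : a ≠ b) : log a - log b ≠ 0 :=
  sub_ne_zero.mpr fun h => hab (log_injOn_pos ha hb h)

lemma inv_mul_add_add_nonneg (ha : 0 < a) (hb : 0 < b) {t : ℝ} (ht : t ∈ Ioi 0) :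
    0 ≤ ((t + a) * (t + b))⁻¹ := by
  have : 0 < t := ht
  positivity

lemma hasDerivAt_log_sub_log_div (ha : 0 < a) (hb : 0 < b) (hab : a ≠ b) {t : ℝ}
    (ht : t ∈ Ici 0) :
    HasDerivAt (fun t => (log (t + a) - log (t + b)) / (b - a)) ((t + a) * (t + b))⁻¹ t := by
  have ht : 0 ≤ t := ht
  have hla := ((hasDerivAt_id t).add_const a).log (by positivity)
  have hlb := ((hasDerivAt_id t).add_const b).log (by positivity)
  refine ((hla.sub hlb).div_const (b - a)).congr_deriv ?_
  simp only [id]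
  field_simp [sub_ne_zero.mpr hab.symm]
  ring

lemma tendsto_log_sub_log_div (a b : ℝ) :
    Tendsto (fun t => (log (t + a) - log (t + b)) / (b - a)) atTop (𝓝 0) := by
  have hratio : Tendsto (fun t => (t + a) / (t + b)) atTop (𝓝 1) := by
    have := (tendsto_const_nhds (x := a - b)).div_atTop
      (tendsto_atTop_add_const_right _ b tendsto_id)
    rw [← add_zero (1 : ℝ)]
    refine (tendsto_const_nhds.add this).congr' ?_
    filter_upwards [eventually_gt_atTop (-b)] with t ht
    have : t + b ≠ 0 := by linarith
    simp only [id]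
    field_simp
    ring
  have hlog := ((continuousAt_log one_ne_zero).tendsto.comp hratio).div_const (b - a)
  rw [log_one, zero_div] at hlog
  refine hlog.congr' ?_
  filter_upwards [eventually_gt_atTop (-a), eventually_gt_atTop (-b)] with t hta htb
  rw [Function.comp_apply, log_div (by linarith) (by linarith)]

lemma hasDerivAt_neg_inv_add (ha : 0 < a) {t : ℝ} (ht : t ∈ Ici 0) :
    HasDerivAt (fun t => -(t + a)⁻¹) ((t + a) * (t + a))⁻¹ t := by
  have ht : 0 ≤ t := ht
  refine (((hasDerivAt_id t).add_const a).inv (by positivity)).neg.congr_deriv ?_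
  simp only [id]
  field_simp

lemma tendsto_neg_inv_add (a : ℝ) : Tendsto (fun t => -(t + a)⁻¹) atTop (𝓝 0) := by
  simpa using (tendsto_atTop_add_const_right _ a tendsto_id).inv_tendsto_atTop.neg

lemma integrableOn_inv_mul_add_add (ha : 0 < a) (hb : 0 < b) :
    IntegrableOn (fun t => ((t + a) * (t + b))⁻¹) (Ioi 0) := by
  rcases eq_or_ne a b with rfl | hab
  · exact integrableOn_Ioi_deriv_of_nonneg' (fun t => hasDerivAt_neg_inv_add ha)
      (fun t => inv_mul_add_add_nonneg ha ha) (tendsto_neg_inv_add a)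
  · exact integrableOn_Ioi_deriv_of_nonneg' (fun t => hasDerivAt_log_sub_log_div ha hb hab)
      (fun t => inv_mul_add_add_nonneg ha hb) (tendsto_log_sub_log_div a b)

lemma resolventIntegral_of_ne (ha : 0 < a) (hb : 0 < b) (hab : a ≠ b) :
    resolventIntegral a b = (log a - log b) / (a - b) := by
  rw [resolventIntegral, integral_Ioi_of_hasDerivAt_of_nonneg'
    (fun t => hasDerivAt_log_sub_log_div ha hb hab) (fun t => inv_mul_add_add_nonneg ha hb)
    (tendsto_log_sub_log_div a b)]
  simp only [zero_add]
  field_simp [sub_ne_zero.mpr hab, sub_ne_zero.mpr hab.symm]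
  ring

lemma resolventIntegral_self (ha : 0 < a) : resolventIntegral a a = a⁻¹ := by
  rw [resolventIntegral, integral_Ioi_of_hasDerivAt_of_nonneg'
    (fun t => hasDerivAt_neg_inv_add ha) (fun t => inv_mul_add_add_nonneg ha ha)
    (tendsto_neg_inv_add a)]
  simp

lemma continuous_rpow_mul_rpow_sub (ha : 0 < a) (hb : 0 < b) :
    Continuous fun s : ℝ => a ^ s * b ^ (1 - s) :=
  (continuous_const_rpow ha.ne').mul
    ((continuous_const_rpow hb.ne').comp (continuous_const.sub continuous_id))

lemma logMean_of_ne (ha : 0 < a) (hb : 0 < b) (hab : a ≠ b) :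
    logMean a b = (a - b) / (log a - log b) := by
  have hlog := log_sub_log_ne_zero ha hb hab
  have hderiv : ∀ s : ℝ, HasDerivAt (fun s => a ^ s * b ^ (1 - s) / (log a - log b))
      (a ^ s * b ^ (1 - s)) s := fun s => by
    have hpa := (hasDerivAt_id s).const_rpow ha
    have hpb := ((hasDerivAt_id s).const_sub 1).const_rpow hb
    refine ((hpa.mul hpb).div_const _).congr_deriv ?_
    simp only [id]
    field_simp
    ring
  rw [logMean, intervalIntegral.integral_eq_sub_of_hasDerivAt (fun s _ => hderiv s)
    ((continuous_rpow_mul_rpow_sub ha hb).intervalIntegrable 0 1)]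
  simp only [rpow_one, rpow_zero, sub_self, sub_zero, mul_one, one_mul]
  ring

lemma logMean_self (ha : 0 < a) : logMean a a = a := by
  simp [logMean, ← rpow_add ha]

lemma resolventIntegral_mul_logMean (ha : 0 < a) (hb : 0 < b) :
    resolventIntegral a b * logMean a b = 1 := by
  rcases eq_or_ne a b with rfl | hab
  · rw [resolventIntegral_self ha, logMean_self ha, inv_mul_cancel₀ ha.ne']
  · have hlog := log_sub_log_ne_zero ha hb hab
    rw [resolventIntegral_of_ne ha hb hab, logMean_of_ne ha hb hab]
    field_simp [sub_ne_zero.mpr hab]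

end LogMean

section Kraus

lemma IsCPFun.comp {Φ Ψ : Mat N → Mat N} (hΨ : IsCPFun Ψ) (hΦ : IsCPFun Φ) :
    IsCPFun (Ψ ∘ Φ) := by
  obtain ⟨K, V, hV⟩ := hΨ
  obtain ⟨L, W, hW⟩ := hΦ
  refine ⟨L * K, fun m => W (finProdFinEquiv.symm m).1 * V (finProdFinEquiv.symm m).2,
    fun A => ?_⟩
  rw [Function.comp_apply, hV, hW, finProdFinEquiv.symm.sum_comp
    (fun p => (W p.1 * V p.2)ᴴ * A * (W p.1 * V p.2)), Fintype.sum_prod_type, Finset.sum_comm]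
  simp only [Finset.mul_sum, Finset.sum_mul, conjTranspose_mul, Matrix.mul_assoc]

lemma isCPFun_conjTranspose_mul_mul (V : Mat N) : IsCPFun fun A => Vᴴ * A * V :=
  ⟨1, fun _ => V, fun A => by simp⟩

lemma isCPFun_hadamard {C : Mat N} (hC : C.PosSemidef) : IsCPFun (C ⊙ ·) := by
  obtain ⟨m, v, rfl⟩ := posSemidef_iff_eq_sum_vecMulVec.mp hC
  refine ⟨m, fun k => diagonal (star (v k)), fun A => ?_⟩
  ext i j
  simp only [hadamard_apply, Matrix.sum_apply, Finset.sum_mul, diagonal_conjTranspose,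
    star_star, diagonal_mul, mul_diagonal, vecMulVec_apply, Pi.star_apply]
  refine Finset.sum_congr rfl fun k _ => ?_
  ring

end Kraus

section UnitaryConj

open Unitary

variable {n : Type*} [Fintype n] [DecidableEq n] (u : unitary (Matrix n n ℂ))

lemma inv_conjStarAlgAut_diagonal {d : n → ℂ} (hd : ∀ i, d i ≠ 0) :
    (conjStarAlgAut ℂ _ u (diagonal d))⁻¹ = conjStarAlgAut ℂ _ u (diagonal d⁻¹) := by
  refine inv_eq_right_inv ?_
  rw [← map_mul, diagonal_mul_diagonal]
  simp only [Pi.inv_apply, mul_inv_cancel₀ (hd _), diagonal_one, map_one]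

lemma trace_conjStarAlgAut_diagonal (A B : Matrix n n ℂ) (d e : n → ℂ) :
    ((conjStarAlgAut ℂ _ u B)ᴴ * conjStarAlgAut ℂ _ u (diagonal d) * conjStarAlgAut ℂ _ u A *
        conjStarAlgAut ℂ _ u (diagonal e)).trace =
      ∑ i, ∑ j, star (B i j) * A i j * (d i * e j) := by
  rw [← star_eq_conjTranspose, ← map_star, ← map_mul, ← map_mul, ← map_mul, conjStarAlgAut_apply,
    trace_mul_cycle, Unitary.coe_star_mul_self, one_mul]
  simp only [trace, diag, mul_diagonal]
  simp only [mul_apply, star_apply, diagonal_apply, mul_ite, mul_zero,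
    Finset.sum_ite_eq', Finset.mem_univ, if_true, Finset.sum_mul]
  rw [Finset.sum_comm]
  refine Finset.sum_congr rfl fun i _ => Finset.sum_congr rfl fun j _ => ?_
  ring

end UnitaryConj

section EntrywiseIntegral

variable {α m n p q : Type*} [MeasurableSpace α] {μ : Measure α}
  [Fintype m] [Fintype n] [DecidableEq m] [DecidableEq n]

lemma linearMap_apply_eq_sum_single (φ : Matrix m n ℂ →ₗ[ℂ] Matrix p q ℂ) (M : Matrix m n ℂ)
    (i : p) (j : q) : φ M i j = ∑ k, ∑ l, M k l * φ (single k l 1) i j := by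
  have hsingle : ∀ k l, single k l (M k l) = M k l • single k l 1 := fun k l => by
    rw [smul_single, smul_eq_mul, mul_one]
  conv_lhs => rw [matrix_eq_sum_single M]
  simp only [map_sum, Matrix.sum_apply, hsingle, map_smul, Matrix.smul_apply, smul_eq_mul]

lemma integral_linearMap_apply (φ : Matrix m n ℂ →ₗ[ℂ] Matrix p q ℂ) {F : α → Matrix m n ℂ}
    (hF : ∀ k l, Integrable (fun t => F t k l) μ) (i : p) (j : q) :
    ∫ t, φ (F t) i j ∂μ = φ (of fun k l => ∫ t, F t k l ∂μ) i j := by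
  rw [funext fun t => linearMap_apply_eq_sum_single φ (F t) i j,
    linearMap_apply_eq_sum_single φ _ i j,
    integral_finsetSum _ fun k _ => integrable_finsetSum _ fun l _ => (hF k l).mul_const _]
  refine Finset.sum_congr rfl fun k _ => ?_
  rw [integral_finsetSum _ fun l _ => (hF k l).mul_const _]
  exact Finset.sum_congr rfl fun l _ => integral_mul_const _ _

end EntrywiseIntegral

section ResolventMultiplier

variable {n : Type*} {x y : ℝ} {ev : n → ℝ}

def resolventWeight (x t : ℝ) : ℝ := √x * (t + x)⁻¹

lemma resolventWeight_mul_resolventWeight (x y t : ℝ) :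
    resolventWeight x t * resolventWeight y t = √x * √y * ((t + x) * (t + y))⁻¹ := by
  rw [resolventWeight, resolventWeight, mul_inv]
  ring

lemma integrableOn_resolventWeight_mul (hx : 0 < x) (hy : 0 < y) :
    IntegrableOn (fun t => resolventWeight x t * resolventWeight y t) (Ioi 0) := by
  simp only [resolventWeight_mul_resolventWeight]
  exact (integrableOn_inv_mul_add_add hx hy).const_mul _

lemma integral_resolventWeight_mul (x y : ℝ) :
    ∫ t in Ioi 0, resolventWeight x t * resolventWeight y t =
      √x * √y * resolventIntegral x y := by
  simp only [resolventWeight_mul_resolventWeight, integral_const_mul, resolventIntegral]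

lemma memLp_resolventWeight (hx : 0 < x) :
    MemLp (fun t => (resolventWeight x t : ℂ)) 2 (volume.restrict (Ioi 0)) := by
  refine (memLp_two_iff_integrable_sq_norm (by unfold resolventWeight; fun_prop)).mpr ?_
  simp only [Complex.norm_real, Real.norm_eq_abs, sq, abs_mul_abs_self]
  exact integrableOn_resolventWeight_mul hx hx

def resolventMultiplier (ev : n → ℝ) : Matrix n n ℂ :=
  of fun i j => ((√(ev i) * √(ev j) * resolventIntegral (ev i) (ev j) : ℝ) : ℂ)

lemma star_resolventMultiplier_apply (ev : n → ℝ) (i j : n) :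
    star (resolventMultiplier ev i j) = resolventMultiplier ev i j :=
  Complex.conj_ofReal _

lemma resolventMultiplier_eq_gram (hev : ∀ i, 0 < ev i) :
    resolventMultiplier ev = gram ℂ fun i => (memLp_resolventWeight (hev i)).toLp := by
  ext i j
  rw [gram_apply, L2.inner_def, resolventMultiplier, of_apply, ← integral_resolventWeight_mul,
    ← integral_complex_ofReal]
  refine integral_congr_ae ?_
  filter_upwards [(memLp_resolventWeight (hev i)).coeFn_toLp,
    (memLp_resolventWeight (hev j)).coeFn_toLp] with t hi hj
  rw [hi, hj, RCLike.inner_apply, Complex.conj_ofReal, Complex.ofReal_mul, mul_comm]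

lemma posSemidef_resolventMultiplier [Finite n] (hev : ∀ i, 0 < ev i) :
    (resolventMultiplier ev).PosSemidef :=
  resolventMultiplier_eq_gram hev ▸ posSemidef_gram ℂ _

lemma resolventMultiplier_apply_self (hev : ∀ i, 0 < ev i) (i : n) :
    resolventMultiplier ev i i = 1 := by
  rw [resolventMultiplier, of_apply, Real.mul_self_sqrt (hev i).le,
    resolventIntegral_self (hev i), mul_inv_cancel₀ (hev i).ne', Complex.ofReal_one]

lemma resolventMultiplier_mul_logMean (hev : ∀ i, 0 < ev i) (i j : n) :
    resolventMultiplier ev i j * (logMean (ev i) (ev j) : ℂ) = ((√(ev i) * √(ev j) : ℝ) : ℂ) := by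
  rw [resolventMultiplier, of_apply, ← Complex.ofReal_mul, mul_assoc,
    resolventIntegral_mul_logMean (hev i) (hev j), mul_one]

lemma resolventMultiplier_apply_ne_zero (hev : ∀ i, 0 < ev i) (i j : n) :
    resolventMultiplier ev i j ≠ 0 := by
  intro h
  have := resolventMultiplier_mul_logMean hev i j
  rw [h, zero_mul, eq_comm, Complex.ofReal_eq_zero] at this
  exact (mul_pos (Real.sqrt_pos.mpr (hev i)) (Real.sqrt_pos.mpr (hev j))).ne' this

end ResolventMultiplier

section Spectral

open Unitary

variable {σ : Mat N} (hσ : σ.PosDef)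

def spectralConj : Mat N ≃⋆ₐ[ℂ] Mat N := conjStarAlgAut ℂ (Mat N) hσ.1.eigenvectorUnitary

lemma mpow_eq_spectralConj (s : ℝ) :
    mpow σ hσ s = spectralConj hσ (diagonal fun i => ((hσ.1.eigenvalues i ^ s : ℝ) : ℂ)) :=
  rfl

lemma smul_one_add_eq_spectralConj (t : ℝ) :
    (t : ℂ) • (1 : Mat N) + σ =
      spectralConj hσ (diagonal fun i => ((t + hσ.1.eigenvalues i : ℝ) : ℂ)) := by
  conv_lhs => rw [hσ.1.spectral_theorem]
  rw [spectralConj, ← map_one (conjStarAlgAut ℂ (Mat N) _), ← map_smul, ← map_add]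
  congr 1
  ext i j
  by_cases h : i = j <;> simp [h]

lemma mpow_half_mul_inv_smul_one_add {t : ℝ} (ht : 0 ≤ t) :
    mpow σ hσ (1 / 2) * ((t : ℂ) • (1 : Mat N) + σ)⁻¹ =
      spectralConj hσ (diagonal fun i => (resolventWeight (hσ.1.eigenvalues i) t : ℂ)) := by
  have hpos : ∀ i, 0 < t + hσ.1.eigenvalues i := fun i => by
    linarith [hσ.eigenvalues_pos i]
  rw [smul_one_add_eq_spectralConj hσ, spectralConj,
    inv_conjStarAlgAut_diagonal _ fun i => Complex.ofReal_ne_zero.mpr (hpos i).ne',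
    mpow_eq_spectralConj hσ, spectralConj, ← map_mul, diagonal_mul_diagonal]
  congr 2 with i
  simp [resolventWeight, Real.sqrt_eq_rpow]

lemma psiBKM_eq (A : Mat N) :
    PsiBKM σ hσ A = spectralConj hσ
      (resolventMultiplier hσ.1.eigenvalues ⊙ (spectralConj hσ).symm A) := by
  set ev := hσ.1.eigenvalues
  set A' := (spectralConj hσ).symm A
  let F : ℝ → Mat N := fun t =>
    of fun k l => A' k l * (resolventWeight (ev k) t * resolventWeight (ev l) t : ℝ)
  have hF : ∀ k l, Integrable (fun t => F t k l) (volume.restrict (Ioi 0)) := fun k l =>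
    ((integrableOn_resolventWeight_mul (hσ.eigenvalues_pos k)
      (hσ.eigenvalues_pos l)).ofReal).const_mul _
  have hintegrand : ∀ t ∈ Ioi (0 : ℝ),
      mpow σ hσ (1 / 2) * ((t : ℂ) • (1 : Mat N) + σ)⁻¹ * A *
        (mpow σ hσ (1 / 2) * ((t : ℂ) • (1 : Mat N) + σ)⁻¹) = spectralConj hσ (F t) :=
    fun t ht => by
      rw [mpow_half_mul_inv_smul_one_add hσ (le_of_lt ht),
        ← (spectralConj hσ).apply_symm_apply A, ← map_mul, ← map_mul]
      congr 1
      ext k l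
      simp only [F, of_apply, mul_diagonal, diagonal_mul, Complex.ofReal_mul]
      ring
  ext i j
  rw [PsiBKM, of_apply, setIntegral_congr_fun measurableSet_Ioi
    fun t ht => congrFun (congrFun (hintegrand t ht) i) j]
  refine (integral_linearMap_apply (spectralConj hσ).toAlgEquiv.toLinearMap hF i j).trans ?_
  refine congrArg (fun M => spectralConj hσ M i j) (ext fun k l => ?_)
  simp only [of_apply, F, hadamard_apply, integral_const_mul, integral_complex_ofReal,
    integral_resolventWeight_mul, resolventMultiplier]
  ring

lemma kmsInner_eq (B A : Mat N) :
    kmsInner σ hσ B A = ∑ i, ∑ j, star ((spectralConj hσ).symm B i j) *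
      (spectralConj hσ).symm A i j *
        ((√(hσ.1.eigenvalues i) * √(hσ.1.eigenvalues j) : ℝ) : ℂ) := by
  conv_lhs => rw [kmsInner, ← (spectralConj hσ).apply_symm_apply A,
    ← (spectralConj hσ).apply_symm_apply B]
  rw [mpow_eq_spectralConj hσ, spectralConj, trace_conjStarAlgAut_diagonal]
  simp [Real.sqrt_eq_rpow]

lemma bkmInner_eq (B A : Mat N) :
    bkmInner σ hσ B A = ∑ i, ∑ j, star ((spectralConj hσ).symm B i j) *
      (spectralConj hσ).symm A i j *
        (logMean (hσ.1.eigenvalues i) (hσ.1.eigenvalues j) : ℂ) := by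
  set ev := hσ.1.eigenvalues
  set c : Fin N → Fin N → ℂ := fun i j =>
    star ((spectralConj hσ).symm B i j) * (spectralConj hσ).symm A i j
  have htrace : ∀ s : ℝ, (Bᴴ * mpow σ hσ s * A * mpow σ hσ (1 - s)).trace =
      ∑ i, ∑ j, c i j * ((ev i ^ s * ev j ^ (1 - s) : ℝ) : ℂ) := fun s => by
    conv_lhs => rw [← (spectralConj hσ).apply_symm_apply A,
      ← (spectralConj hσ).apply_symm_apply B]
    rw [mpow_eq_spectralConj hσ, mpow_eq_spectralConj hσ, spectralConj,
      trace_conjStarAlgAut_diagonal]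
    push_cast
    rfl
  have hcont : ∀ i j, Continuous fun s : ℝ => c i j * ((ev i ^ s * ev j ^ (1 - s) : ℝ) : ℂ) :=
    fun i j => continuous_const.mul (Complex.continuous_ofReal.comp
      (continuous_rpow_mul_rpow_sub (hσ.eigenvalues_pos i) (hσ.eigenvalues_pos j)))
  simp only [bkmInner, htrace]
  rw [intervalIntegral.integral_finsetSum fun i _ =>
    (continuous_finsetSum _ fun j _ => hcont i j).intervalIntegrable 0 1]
  refine Finset.sum_congr rfl fun i _ => ?_
  rw [intervalIntegral.integral_finsetSum fun j _ => (hcont i j).intervalIntegrable 0 1]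
  refine Finset.sum_congr rfl fun j _ => ?_
  rw [intervalIntegral.integral_const_mul, intervalIntegral.integral_ofReal, logMean]

lemma spectralConj_symm_psiBKM (A : Mat N) :
    (spectralConj hσ).symm (PsiBKM σ hσ A) =
      resolventMultiplier hσ.1.eigenvalues ⊙ (spectralConj hσ).symm A := by
  rw [psiBKM_eq, StarAlgEquiv.symm_apply_apply]

lemma bkmInner_psiBKM_right (B A : Mat N) :
    bkmInner σ hσ B (PsiBKM σ hσ A) = kmsInner σ hσ B A := by
  rw [bkmInner_eq, kmsInner_eq]
  refine Finset.sum_congr rfl fun i _ => Finset.sum_congr rfl fun j _ => ?_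
  rw [spectralConj_symm_psiBKM, hadamard_apply,
    ← resolventMultiplier_mul_logMean hσ.eigenvalues_pos]
  ring

lemma bkmInner_psiBKM_left (B A : Mat N) :
    bkmInner σ hσ (PsiBKM σ hσ B) A = kmsInner σ hσ B A := by
  rw [bkmInner_eq, kmsInner_eq]
  refine Finset.sum_congr rfl fun i _ => Finset.sum_congr rfl fun j _ => ?_
  rw [spectralConj_symm_psiBKM, hadamard_apply, star_mul', star_resolventMultiplier_apply,
    ← resolventMultiplier_mul_logMean hσ.eigenvalues_pos]
  ring

lemma isCPFun_psiBKM : IsCPFun (PsiBKM σ hσ) := by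
  set U : Mat N := (hσ.1.eigenvectorUnitary : Mat N)
  have hΨ : PsiBKM σ hσ = (fun X => (star U)ᴴ * X * star U) ∘
      (resolventMultiplier hσ.1.eigenvalues ⊙ ·) ∘ fun X => Uᴴ * X * U := by
    funext A
    rw [psiBKM_eq]
    simp [spectralConj, U, star_eq_conjTranspose]
  rw [hΨ]
  exact (isCPFun_conjTranspose_mul_mul _).comp
    ((isCPFun_hadamard (posSemidef_resolventMultiplier hσ.eigenvalues_pos)).comp
      (isCPFun_conjTranspose_mul_mul _))

lemma psiBKM_one : PsiBKM σ hσ 1 = 1 := by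
  rw [psiBKM_eq, map_one, hadamard_one_eq_one_iff.mpr, map_one]
  ext i
  exact resolventMultiplier_apply_self hσ.eigenvalues_pos i

lemma psiBKM_injective : Function.Injective (PsiBKM σ hσ) := fun X Y h => by
  rw [psiBKM_eq, psiBKM_eq] at h
  apply (spectralConj hσ).symm.injective
  ext i j
  exact mul_left_cancel₀ (resolventMultiplier_apply_ne_zero hσ.eigenvalues_pos i j)
    (congrFun (congrFun ((spectralConj hσ).injective h) i) j)

end Spectral

theorem kms_to_bkm_general (N : ℕ) (σ : Mat N) (hσ : σ.PosDef) :
    (IsCPFun (PsiBKM σ hσ) ∧ PsiBKM σ hσ 1 = 1) ∧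
    (∀ Φ : Mat N → Mat N, IsCPFun Φ → IsKMSSelfAdjointFun σ hσ Φ →
        IsCPFun (PsiBKM σ hσ ∘ Φ) ∧ IsBKMSelfAdjointFun σ hσ (PsiBKM σ hσ ∘ Φ)) ∧
    (∀ Φ₁ Φ₂ : Mat N → Mat N,
        IsCPFun Φ₁ → IsKMSSelfAdjointFun σ hσ Φ₁ →
        IsCPFun Φ₂ → IsKMSSelfAdjointFun σ hσ Φ₂ →
        PsiBKM σ hσ ∘ Φ₁ = PsiBKM σ hσ ∘ Φ₂ → Φ₁ = Φ₂) ∧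
    (∀ Φ : Mat N → Mat N, IsCPFun Φ → IsKMSSelfAdjointFun σ hσ Φ → Φ 1 = 1 →
        (PsiBKM σ hσ ∘ Φ) 1 = 1) := by
  refine ⟨⟨isCPFun_psiBKM hσ, psiBKM_one hσ⟩,
    fun Φ hCP hKMS => ⟨(isCPFun_psiBKM hσ).comp hCP, fun A B => ?_⟩,
    fun Φ₁ Φ₂ _ _ _ _ h => (psiBKM_injective hσ).comp_left h,
    fun Φ _ _ hΦ => by rw [Function.comp_apply, hΦ, psiBKM_one]⟩
  rw [Function.comp_apply, Function.comp_apply, bkmInner_psiBKM_right, bkmInner_psiBKM_left,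
    hKMS]

/-- `Ψ` is a unital CP map, and `Φ ↦ Ψ ∘ Φ` maps the set of KMS self-adjoint
CP maps injectively into the set of BKM self-adjoint CP maps, taking unital maps to unital
maps. -/
theorem kms_to_bkm (N : ℕ) (hN : 2 ≤ N) (σ : Mat N) (hσ : σ.PosDef)
    (htr : σ.trace = 1) :
    (IsCPFun (PsiBKM σ hσ) ∧ PsiBKM σ hσ 1 = 1) ∧
    (∀ Φ : Mat N → Mat N, IsCPFun Φ → IsKMSSelfAdjointFun σ hσ Φ →
        IsCPFun (PsiBKM σ hσ ∘ Φ) ∧ IsBKMSelfAdjointFun σ hσ (PsiBKM σ hσ ∘ Φ)) ∧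
    (∀ Φ₁ Φ₂ : Mat N → Mat N,
        IsCPFun Φ₁ → IsKMSSelfAdjointFun σ hσ Φ₁ →
        IsCPFun Φ₂ → IsKMSSelfAdjointFun σ hσ Φ₂ →
        PsiBKM σ hσ ∘ Φ₁ = PsiBKM σ hσ ∘ Φ₂ → Φ₁ = Φ₂) ∧
    (∀ Φ : Mat N → Mat N, IsCPFun Φ → IsKMSSelfAdjointFun σ hσ Φ → Φ 1 = 1 →
        (PsiBKM σ hσ ∘ Φ) 1 = 1) :=
  kms_to_bkm_general N σ hσ
end
end

section
/- Fix s ∈ [0,1] and let m_s = ½(δ_s + δ_{1−s}). For every σ ∈ M_N(ℂ) positive definite with Tr σ = 1, the inverse of the invertible linear map M_{m_s}(A) = ½(σ^s A σ^{1−s} + σ^{1−s} A σ^s) on M_N(ℂ) is completely positive. Equivalently, for any λ_1,…,λ_N > 0, the N×N matrix whose (i,j) entry is 2 / (λ_i^s λ_j^{1−s} + λ_i^{1−s} λ_j^s) is positive semidefinite. -/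
/-!
Diagonalize `σ = U diag(λ) Uᴴ`. In the eigenbasis of `σ` the map `M_{m_s}` is Schur
multiplication by `Lᵢⱼ = ½ (λᵢ^s λⱼ^(1-s) + λᵢ^(1-s) λⱼ^s)`, so its inverse is Schur multiplication
by the entrywise inverse `Kᵢⱼ = 2 / (aᵢ bⱼ + bᵢ aⱼ)`, `a = λ^s`, `b = λ^(1-s)`. Schur multiplication
by a positive semidefinite `K = ∑ⱼ vⱼ vⱼᴴ` has the Kraus operators `U diag(v̄ⱼ) Uᴴ`, and `K` is
positive semidefinite because `K = 2 D C D` with `D = diag(1/a)` and `C` the Cauchy matrix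
`1 / (rᵢ + rⱼ)`, `r = b / a`, which is the Gram matrix of the functions `t ↦ exp (-rᵢ t)` in
`L²(0, ∞)`.
-/

open MeasureTheory Matrix
open scoped ComplexOrder

noncomputable section

variable {N : ℕ}

theorem integral_exp_neg_mul_mul_exp_neg_mul_Ioi {a b : ℝ} (ha : 0 < a) (hb : 0 < b) :
    ∫ t in Set.Ioi (0 : ℝ), Real.exp (-(a * t)) * Real.exp (-(b * t)) = 1 / (a + b) := by
  simp_rw [← Real.exp_add, show ∀ t, -(a * t) + -(b * t) = -(a + b) * t from fun t => by ring]
  rw [integral_exp_mul_Ioi (by linarith), mul_zero, Real.exp_zero]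
  field_simp

theorem posSemidef_cauchy {n : Type*} [Fintype n] {r : n → ℝ} (hr : ∀ i, 0 < r i) :
    (of fun i j => 1 / (r i + r j)).PosSemidef := by
  rw [posSemidef_iff_dotProduct_mulVec]
  refine ⟨by ext i j; simp [add_comm], fun x => ?_⟩
  set f : n → ℝ → ℝ := fun i t => x i * Real.exp (-(r i * t))
  have hf : ∀ i j, IntegrableOn (fun t => f i t * f j t) (Set.Ioi 0) := fun i j => by
    have := (exp_neg_integrableOn_Ioi 0 (add_pos (hr i) (hr j))).const_mul (x i * x j)
    refine IntegrableOn.congr_fun this (fun t _ => ?_) measurableSet_Ioi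
    simp only [f, neg_mul, add_mul, neg_add, Real.exp_add]
    ring
  calc (0 : ℝ) ≤ ∫ t in Set.Ioi 0, (∑ i, f i t) ^ 2 := integral_nonneg fun t => sq_nonneg _
    _ = ∑ i, ∑ j, ∫ t in Set.Ioi 0, f i t * f j t := by
      simp_rw [sq, Finset.sum_mul_sum]
      rw [integral_finsetSum _ fun i _ => integrable_finsetSum _ fun j _ => hf i j]
      exact Finset.sum_congr rfl fun i _ => integral_finsetSum _ fun j _ => hf i j
    _ = star x ⬝ᵥ (of fun i j => 1 / (r i + r j)) *ᵥ x := by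
      simp only [f, mul_mul_mul_comm (x _), integral_const_mul,
        integral_exp_neg_mul_mul_exp_neg_mul_Ioi (hr _) (hr _)]
      simp only [dotProduct, mulVec, Finset.mul_sum, of_apply, star_trivial]
      exact Finset.sum_congr rfl fun i _ => Finset.sum_congr rfl fun j _ => by ring

theorem posSemidef_one_div_mul_add_mul {n : Type*} [Fintype n] [DecidableEq n] {a b : n → ℝ}
    (ha : ∀ i, 0 < a i) (hb : ∀ i, 0 < b i) :
    (of fun i j => 1 / (a i * b j + b i * a j)).PosSemidef := by
  have hC := (posSemidef_cauchy fun i => div_pos (hb i) (ha i)).mul_mul_conjTranspose_same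
    (diagonal fun i => 1 / a i)
  convert hC using 1
  ext i j
  have := ha i; have := ha j
  simp only [one_div, of_apply, conjTranspose_eq_transpose_of_trivial, diagonal_transpose,
    mul_diagonal, diagonal_mul]
  field_simp
  ring

section conjHadamard

variable {n R : Type*} [Fintype n] [CommRing R] [StarRing R]

def conjHadamard (U K A : Matrix n n R) : Matrix n n R :=
  U * (K ⊙ (Uᴴ * A * U)) * Uᴴ

theorem conjHadamard_add_left (U K L A : Matrix n n R) :
    conjHadamard U (K + L) A = conjHadamard U K A + conjHadamard U L A := by
  simp only [conjHadamard, add_hadamard, Matrix.mul_add, Matrix.add_mul]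

theorem conjHadamard_sum_left {ι : Type*} (s : Finset ι) (U A : Matrix n n R)
    (K : ι → Matrix n n R) :
    conjHadamard U (∑ i ∈ s, K i) A = ∑ i ∈ s, conjHadamard U (K i) A := by
  induction s using Finset.cons_induction with
  | empty =>
    simp only [conjHadamard, Finset.sum_empty, zero_hadamard, Matrix.mul_zero, Matrix.zero_mul]
  | cons i s hi ih => rw [Finset.sum_cons, Finset.sum_cons, conjHadamard_add_left, ih]

theorem conjHadamard_smul_left (c : R) (U K A : Matrix n n R) :
    conjHadamard U (c • K) A = c • conjHadamard U K A := by
  simp only [conjHadamard, smul_hadamard, Matrix.mul_smul, Matrix.smul_mul]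

theorem conjHadamard_conjHadamard [DecidableEq n] {U : Matrix n n R} (hU : Uᴴ * U = 1)
    (K L A : Matrix n n R) :
    conjHadamard U L (conjHadamard U K A) = conjHadamard U (L ⊙ K) A := by
  have hU' : ∀ X, Uᴴ * (U * X) = X := fun X => by rw [← Matrix.mul_assoc, hU, Matrix.one_mul]
  simp only [conjHadamard, Matrix.mul_assoc, hU', hU, Matrix.mul_one, hadamard_assoc]

theorem conjHadamard_of_one [DecidableEq n] {U : Matrix n n R} (hU : U * Uᴴ = 1)
    (A : Matrix n n R) : conjHadamard U (of 1) A = A := by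
  have hU' : ∀ X, U * (Uᴴ * X) = X := fun X => by rw [← Matrix.mul_assoc, hU, Matrix.one_mul]
  simp only [conjHadamard, of_one_hadamard, Matrix.mul_assoc, hU', hU, Matrix.mul_one]

theorem conj_diagonal_mul_mul_conj_diagonal [DecidableEq n] (U A : Matrix n n R) (d e : n → R) :
    (U * diagonal d * Uᴴ) * A * (U * diagonal e * Uᴴ) = conjHadamard U (vecMulVec d e) A := by
  have : diagonal d * (Uᴴ * A * U) * diagonal e = vecMulVec d e ⊙ (Uᴴ * A * U) := by
    ext i j
    simp only [diagonal_mul, mul_diagonal, hadamard_apply, vecMulVec_apply]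
    ring
  rw [conjHadamard, ← this]
  simp only [Matrix.mul_assoc]

end conjHadamard

theorem Matrix.PosSemidef.map_ofReal {n : Type*} [Fintype n] {K : Matrix n n ℝ}
    (hK : K.PosSemidef) : (K.map ((↑) : ℝ → ℂ)).PosSemidef := by
  obtain ⟨m, v, rfl⟩ := posSemidef_iff_eq_sum_vecMulVec.mp hK
  refine posSemidef_iff_eq_sum_vecMulVec.mpr ⟨m, fun j i => v j i, ?_⟩
  ext i k
  simp [vecMulVec_apply, Matrix.sum_apply]

theorem exists_kraus_conjHadamard {n : Type*} [Fintype n] [DecidableEq n] (U : Matrix n n ℂ)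
    {K : Matrix n n ℂ} (hK : K.PosSemidef) :
    ∃ (m : ℕ) (V : Fin m → Matrix n n ℂ), ∀ A, conjHadamard U K A = ∑ j, (V j)ᴴ * A * V j := by
  obtain ⟨m, v, rfl⟩ := posSemidef_iff_eq_sum_vecMulVec.mp hK
  refine ⟨m, fun j => U * diagonal (star (v j)) * Uᴴ, fun A => ?_⟩
  have hV : ∀ j, (U * diagonal (star (v j)) * Uᴴ)ᴴ = U * diagonal (v j) * Uᴴ := fun j => by
    simp only [conjTranspose_mul, conjTranspose_conjTranspose, diagonal_conjTranspose, star_star,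
      Matrix.mul_assoc]
  simp only [hV, conj_diagonal_mul_mul_conj_diagonal, conjHadamard_sum_left]

theorem posSemidef_two_div_rpow_mul_rpow_add {n : Type*} [Fintype n] [DecidableEq n] (s : ℝ)
    {lam : n → ℝ} (hlam : ∀ i, 0 < lam i) :
    (of fun i j => 2 / (lam i ^ s * lam j ^ (1 - s) + lam i ^ (1 - s) * lam j ^ s)).PosSemidef := by
  have h := (posSemidef_one_div_mul_add_mul (fun i => Real.rpow_pos_of_pos (hlam i) s)
    (fun i => Real.rpow_pos_of_pos (hlam i) (1 - s))).smul (zero_le_two : (0 : ℝ) ≤ 2)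
  convert h using 1
  ext i j
  simp [div_eq_mul_inv]

theorem half_smul_vecMulVec_add_hadamard_two_div {n : Type*} {a b : n → ℝ}
    (hab : ∀ i j, a i * b j + b i * a j ≠ 0) :
    ((1 / 2 : ℂ) • (vecMulVec (fun i => (a i : ℂ)) (fun i => (b i : ℂ)) +
        vecMulVec (fun i => (b i : ℂ)) (fun i => (a i : ℂ)))) ⊙
      (of fun i j => 2 / (a i * b j + b i * a j)).map ((↑) : ℝ → ℂ) = of 1 := by
  ext i j
  have : (a i * b j + b i * a j : ℂ) ≠ 0 := by exact_mod_cast hab i j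
  simp only [one_div, smul_add, hadamard_apply, Matrix.add_apply, Matrix.smul_apply,
    vecMulVec_apply, smul_eq_mul, map_apply, of_apply, Complex.ofReal_div, Complex.ofReal_ofNat,
    Complex.ofReal_add, Complex.ofReal_mul, Pi.one_apply]
  field_simp

theorem mpow_mul_mul_mpow (σ : Mat N) (hσ : σ.PosDef) (s t : ℝ) (A : Mat N) :
    mpow σ hσ s * A * mpow σ hσ t = conjHadamard (hσ.1.eigenvectorUnitary : Mat N)
      (vecMulVec (fun i => ((hσ.1.eigenvalues i ^ s : ℝ) : ℂ))
        (fun i => ((hσ.1.eigenvalues i ^ t : ℝ) : ℂ))) A :=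
  conj_diagonal_mul_mul_conj_diagonal _ _ _ _

theorem ms_inverse_CP_general (N : ℕ) (s : ℝ) :
    (∀ (σ : Mat N) (hσ : σ.PosDef), σ.trace = 1 →
      ∀ Minv : Mat N →ₗ[ℂ] Mat N,
        ((∀ A, Minv ((1/2 : ℂ) • (mpow σ hσ s * A * mpow σ hσ (1 - s) +
            mpow σ hσ (1 - s) * A * mpow σ hσ s)) = A) ∧
          (∀ A, (1/2 : ℂ) • (mpow σ hσ s * Minv A * mpow σ hσ (1 - s) +
            mpow σ hσ (1 - s) * Minv A * mpow σ hσ s) = A)) →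
        IsCP Minv) ∧
    (∀ lam : Fin N → ℝ, (∀ i, 0 < lam i) →
      Matrix.PosSemidef (Matrix.of fun i j : Fin N =>
        (2 / (lam i ^ s * lam j ^ (1 - s) + lam i ^ (1 - s) * lam j ^ s) : ℝ))) := by
  refine ⟨fun σ hσ _ Minv hM => ?_, fun lam hlam => posSemidef_two_div_rpow_mul_rpow_add s hlam⟩
  set U : Mat N := (hσ.1.eigenvectorUnitary : Mat N)
  have hlam := hσ.eigenvalues_pos
  obtain ⟨m, V, hV⟩ := exists_kraus_conjHadamard U
    (posSemidef_two_div_rpow_mul_rpow_add s hlam).map_ofReal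
  refine ⟨m, V, fun A => ?_⟩
  have hden : ∀ i j, hσ.1.eigenvalues i ^ s * hσ.1.eigenvalues j ^ (1 - s) +
      hσ.1.eigenvalues i ^ (1 - s) * hσ.1.eigenvalues j ^ s ≠ 0 := fun i j => by
    have := hlam i; have := hlam j; positivity
  rw [← hV, ← hM.1 (conjHadamard U _ A), mpow_mul_mul_mpow, mpow_mul_mul_mpow,
    ← conjHadamard_add_left, ← conjHadamard_smul_left,
    conjHadamard_conjHadamard (mem_unitaryGroup_iff'.mp hσ.1.eigenvectorUnitary.2),
    half_smul_vecMulVec_add_hadamard_two_div hden,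
    conjHadamard_of_one (mem_unitaryGroup_iff.mp hσ.1.eigenvectorUnitary.2)]

/-- for `m_s = ½(δ_s + δ_{1-s})`, the inverse of
`M_{m_s}(A) = ½(σ^s A σ^{1-s} + σ^{1-s} A σ^s)` is completely positive for every positive
definite `σ` of trace one; equivalently, for positive `λ_i` the matrix with entries
`2/(λ_i^s λ_j^{1-s} + λ_i^{1-s} λ_j^s)` is positive semidefinite. -/
theorem ms_inverse_CP (N : ℕ) (hN : 2 ≤ N) (s : ℝ) (hs : s ∈ Set.Icc (0:ℝ) 1) :
    (∀ (σ : Mat N) (hσ : σ.PosDef), σ.trace = 1 →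
      ∀ Minv : Mat N →ₗ[ℂ] Mat N,
        ((∀ A, Minv ((1/2 : ℂ) • (mpow σ hσ s * A * mpow σ hσ (1 - s) +
            mpow σ hσ (1 - s) * A * mpow σ hσ s)) = A) ∧
          (∀ A, (1/2 : ℂ) • (mpow σ hσ s * Minv A * mpow σ hσ (1 - s) +
            mpow σ hσ (1 - s) * Minv A * mpow σ hσ s) = A)) →
        IsCP Minv) ∧
    (∀ lam : Fin N → ℝ, (∀ i, 0 < lam i) →
      Matrix.PosSemidef (Matrix.of fun i j : Fin N =>
        (2 / (lam i ^ s * lam j ^ (1 - s) + lam i ^ (1 - s) * lam j ^ s) : ℝ))) :=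
  ms_inverse_CP_general N s
end
end
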